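/- arXiv:2502.07697 — 10 statements merged into one kernel-verified Lean document; each statement's English description precedes it below -/
import Mathlib

section
/- Let n ≥ 1 and let f : ℝⁿ → ℝ be symmetric, convex, and differentiable. Then for every x ∈ ℝⁿ and all indices i, j ∈ {1,…,n} one has (∂_i f(x) − ∂_j f(x))·(x_i − x_j) ≥ 0. -/
/-- If `f : ℝⁿ → ℝ` is symmetric, convex and differentiable, then for every
`x` and all indices `i, j` one has `(∂ᵢ f (x) - ∂ⱼ f (x)) * (x i - x j) ≥ 0`. -/
theorem stmt_2 (n : ℕ) (hn : 1 ≤ n) (f : (Fin n → ℝ) → ℝ)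
    (hsym : ∀ (σ : Equiv.Perm (Fin n)) (x : Fin n → ℝ), f (x ∘ σ) = f x)
    (hconv : ConvexOn ℝ Set.univ f)
    (hdiff : Differentiable ℝ f)
    (x : Fin n → ℝ) (i j : Fin n) :
    0 ≤ (fderiv ℝ f x (Pi.single i 1) - fderiv ℝ f x (Pi.single j 1)) * (x i - x j) := by
  rcases eq_or_ne i j with rfl | hij
  · simp
  set v : Fin n → ℝ := (x j - x i) • (Pi.single i 1 - Pi.single j 1) with hv
  have hxv : x + v = x ∘ Equiv.swap i j := by
    funext k
    rcases eq_or_ne k i with rfl | hki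
    · simp [hv, Pi.single_apply, hij, Equiv.swap_apply_left]
    rcases eq_or_ne k j with rfl | hkj
    · simp [hv, Pi.single_apply, hij.symm, Equiv.swap_apply_right]
    · simp [hv, Pi.single_apply, hki, hkj, Equiv.swap_apply_of_ne_of_ne hki hkj]
  -- 1D restriction
  set g : ℝ → ℝ := fun t => f (x + t • v) with hg
  have hgconv : ConvexOn ℝ Set.univ g := by
    have := hconv.comp_affineMap (AffineMap.lineMap x (x + v) : ℝ →ᵃ[ℝ] (Fin n → ℝ))
    simpa [hg, AffineMap.lineMap_apply, Function.comp_def, add_sub_cancel_left, add_comm] using this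
  have hderiv : HasDerivAt g (fderiv ℝ f x v) 0 := by
    have h1 : HasDerivAt (fun t : ℝ => x + t • v) v 0 := by
      simpa using ((hasDerivAt_id (0:ℝ)).smul_const v).const_add x
    have := (hdiff (x + (0:ℝ) • v)).hasFDerivAt.comp_hasDerivAt 0 h1
    simpa [hg, Function.comp_def] using this
  have hslope : fderiv ℝ f x v ≤ slope g 0 1 :=
    hgconv.le_slope_of_hasDerivAt (Set.mem_univ 0) (Set.mem_univ 1) one_pos hderiv
  have hg1 : g 1 = g 0 := by
    simp only [hg, one_smul, zero_smul, add_zero, hxv]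
    exact hsym (Equiv.swap i j) x
  have hle : fderiv ℝ f x v ≤ 0 := by
    rw [slope_def_field, hg1] at hslope
    simpa using hslope
  have hval : fderiv ℝ f x v
      = (x j - x i) * (fderiv ℝ f x (Pi.single i 1) - fderiv ℝ f x (Pi.single j 1)) := by
    rw [hv, map_smul, map_sub, smul_eq_mul]
  rw [hval] at hle
  nlinarith [hle]
end

section
/- Let n ≥ 1 and let f : ℝⁿ → ℝ be symmetric, strictly convex, and differentiable. Then for every x ∈ ℝⁿ and all indices i, j ∈ {1,…,n} with x_i ≠ x_j one has (∂_i f(x) − ∂_j f(x))·(x_i − x_j) > 0. -/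
/-- Gradient inequality for strictly convex differentiable functions:
`f'(x)(y - x) < f y - f x` whenever `y ≠ x`. -/
lemma strict_grad_ineq {E : Type*} [NormedAddCommGroup E] [NormedSpace ℝ E]
    (f : E → ℝ) (hconv : StrictConvexOn ℝ Set.univ f) (hdiff : Differentiable ℝ f)
    (x y : E) (hxy : y ≠ x) : fderiv ℝ f x (y - x) < f y - f x := by
  set v : E := y - x with hv
  have hv0 : v ≠ 0 := sub_ne_zero.mpr hxy
  set g : ℝ → ℝ := fun t => f (x + t • v) with hg
  have hline : ∀ a b : ℝ, a ≠ b → x + a • v ≠ x + b • v := by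
    intro a b hab h
    apply hab
    have h2 : a • v = b • v := by
      have := add_left_cancel h
      exact this
    have h3 : (a - b) • v = 0 := by rw [sub_smul, h2, sub_self]
    rcases smul_eq_zero.mp h3 with h4 | h4
    · exact sub_eq_zero.mp h4
    · exact absurd h4 hv0
  have hgconv : StrictConvexOn ℝ Set.univ g := by
    refine ⟨convex_univ, ?_⟩
    intro a _ b _ hab σ τ hσ hτ hστ
    have key := hconv.2 (Set.mem_univ (x + a • v)) (Set.mem_univ (x + b • v))
      (hline a b hab) hσ hτ hστ
    have heq : σ • (x + a • v) + τ • (x + b • v) = x + (σ * a + τ * b) • v := by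
      have h1 : τ = 1 - σ := by linarith
      subst h1
      module
    rw [heq] at key
    simpa [hg, smul_eq_mul] using key
  have hderiv : HasDerivAt g (fderiv ℝ f x v) 0 := by
    have hl : HasDerivAt (fun t : ℝ => x + t • v) v 0 := by
      simpa using ((hasDerivAt_id (0 : ℝ)).smul_const v).const_add x
    have hf : HasFDerivAt f (fderiv ℝ f (x + (0 : ℝ) • v)) (x + (0 : ℝ) • v) :=
      (hdiff (x + (0 : ℝ) • v)).hasFDerivAt
    have := hf.comp_hasDerivAt 0 hl
    simp only [zero_smul, add_zero] at this
    exact this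
  have hslope := hgconv.lt_slope_of_hasDerivAt (Set.mem_univ (0 : ℝ))
    (Set.mem_univ (1 : ℝ)) one_pos hderiv
  have hslope' : slope g 0 1 = f y - f x := by
    simp [slope_def_field, hg, hv]
  rw [hslope'] at hslope
  exact hslope

/-- If `f : ℝⁿ → ℝ` is symmetric, strictly convex and differentiable, then for
every `x` and all indices `i, j` with `x i ≠ x j` one has
`(∂ᵢ f (x) - ∂ⱼ f (x)) * (x i - x j) > 0`. -/
theorem stmt_3 (n : ℕ) (hn : 1 ≤ n) (f : (Fin n → ℝ) → ℝ)
    (hsym : ∀ (σ : Equiv.Perm (Fin n)) (x : Fin n → ℝ), f (x ∘ σ) = f x)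
    (hconv : StrictConvexOn ℝ Set.univ f)
    (hdiff : Differentiable ℝ f)
    (x : Fin n → ℝ) (i j : Fin n) (hij : x i ≠ x j) :
    0 < (fderiv ℝ f x (Pi.single i 1) - fderiv ℝ f x (Pi.single j 1)) * (x i - x j) := by
  have hne : i ≠ j := fun h => hij (by rw [h])
  set y : Fin n → ℝ := x ∘ (Equiv.swap i j) with hy
  have hfy : f y = f x := hsym (Equiv.swap i j) x
  have hyx : y ≠ x := by
    intro h
    apply hij
    have := congrFun h i
    simpa [hy, Equiv.swap_apply_left] using this.symm
  have hkey := strict_grad_ineq f hconv hdiff x y hyx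
  rw [hfy, sub_self] at hkey
  have hdecomp : y - x = (x j - x i) • (Pi.single i 1 : Fin n → ℝ)
      + (x i - x j) • (Pi.single j 1 : Fin n → ℝ) := by
    funext k
    by_cases hki : k = i
    · subst hki
      simp [hy, Equiv.swap_apply_left, Pi.single_apply, hne]
    · by_cases hkj : k = j
      · subst hkj
        simp [hy, Equiv.swap_apply_right, Pi.single_apply, (Ne.symm hne)]
      · simp [hy, Equiv.swap_apply_of_ne_of_ne hki hkj, Pi.single_apply, hki, hkj]
  rw [hdecomp, map_add, map_smul, map_smul] at hkey
  simp only [smul_eq_mul] at hkey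
  nlinarith [hkey]
end

section
/- Let f : ℝ² → ℝ be of class C² and let λ₁ < λ₂ be real numbers. For t ∈ ℝ define μ₁(t) = ((λ₁+λ₂) − √((λ₂−λ₁)² + 4t²))/2 and μ₂(t) = ((λ₁+λ₂) + √((λ₂−λ₁)² + 4t²))/2 (the two eigenvalues of the symmetric matrix with diagonal entries λ₁, λ₂ and off-diagonal entries t), and set g(t) := f(μ₁(t), μ₂(t)). Then g is twice differentiable at t = 0 with g'(0) = 0 and g''(0) = 2·(∂₂f(λ₁,λ₂) − ∂₁f(λ₁,λ₂))/(λ₂ − λ₁). -/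
/-- For `f : ℝ² → ℝ` of class C² and `λ₁ < λ₂`, the function
`g t = f (μ₁ t, μ₂ t)`, where `μ₁ t ≤ μ₂ t` are the eigenvalues of the symmetric matrix
with diagonal `λ₁, λ₂` and off-diagonal entries `t`, is twice differentiable at `0` with
`g' 0 = 0` and `g'' 0 = 2 (∂₂ f (λ₁,λ₂) - ∂₁ f (λ₁,λ₂)) / (λ₂ - λ₁)`. -/
theorem stmt_4 (f : ℝ × ℝ → ℝ) (hf : ContDiff ℝ 2 f) (l1 l2 : ℝ) (hl : l1 < l2)
    (g : ℝ → ℝ)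
    (hg : ∀ t : ℝ, g t =
      f (((l1 + l2) - Real.sqrt ((l2 - l1) ^ 2 + 4 * t ^ 2)) / 2,
         ((l1 + l2) + Real.sqrt ((l2 - l1) ^ 2 + 4 * t ^ 2)) / 2)) :
    DifferentiableAt ℝ g 0 ∧ DifferentiableAt ℝ (deriv g) 0 ∧
    deriv g 0 = 0 ∧
    deriv (deriv g) 0 =
      2 * (fderiv ℝ f (l1, l2) (0, 1) - fderiv ℝ f (l1, l2) (1, 0)) / (l2 - l1) := by
  have hc : (0:ℝ) < l2 - l1 := sub_pos.mpr hl
  set s : ℝ → ℝ := fun t => Real.sqrt ((l2 - l1) ^ 2 + 4 * t ^ 2) with hsdef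
  have hq : ∀ t : ℝ, (0:ℝ) < (l2 - l1) ^ 2 + 4 * t ^ 2 := fun t => by positivity
  have hs_pos : ∀ t, 0 < s t := fun t => Real.sqrt_pos.mpr (hq t)
  have hs0 : s 0 = l2 - l1 := by
    simp only [hsdef]
    norm_num
    exact Real.sqrt_sq hc.le
  have hs' : ∀ t : ℝ, HasDerivAt s (4 * t / s t) t := by
    intro t
    have hq' : HasDerivAt (fun t : ℝ => (l2 - l1) ^ 2 + 4 * t ^ 2) (8 * t) t := by
      have := ((hasDerivAt_pow 2 t).const_mul (4:ℝ)).const_add ((l2 - l1) ^ 2)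
      simpa using this.congr_deriv (by ring)
    have := (Real.hasDerivAt_sqrt (hq t).ne').comp t hq'
    simpa [hsdef, Function.comp_def] using this.congr_deriv (by
      have h : Real.sqrt ((l2 - l1) ^ 2 + 4 * t ^ 2) ≠ 0 := (hs_pos t).ne'
      field_simp
      ring)
  set φ : ℝ → ℝ × ℝ := fun t => (((l1 + l2) - s t) / 2, ((l1 + l2) + s t) / 2) with hφdef
  have hφ' : ∀ t : ℝ, HasDerivAt φ (-(4 * t / s t) / 2, (4 * t / s t) / 2) t := by
    intro t
    have h1 : HasDerivAt (fun t => ((l1 + l2) - s t) / 2) (-(4 * t / s t) / 2) t := by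
      have := ((hasDerivAt_const t (l1 + l2)).sub (hs' t)).div_const 2
      simpa using this
    have h2 : HasDerivAt (fun t => ((l1 + l2) + s t) / 2) ((4 * t / s t) / 2) t := by
      have := ((hasDerivAt_const t (l1 + l2)).add (hs' t)).div_const 2
      simpa using this
    exact h1.prodMk h2
  have hφ0 : φ 0 = (l1, l2) := by
    simp only [hφdef, hs0, Prod.mk.injEq]
    constructor <;> ring
  have hgφ : g = fun t => f (φ t) := funext hg
  have hg' : ∀ t : ℝ, HasDerivAt g
      (fderiv ℝ f (φ t) (-(4 * t / s t) / 2, (4 * t / s t) / 2)) t := by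
    intro t
    have hdf := ((hf.differentiable (by norm_num)) (φ t)).hasFDerivAt
    have := hdf.comp_hasDerivAt t (hφ' t)
    rw [hgφ]
    exact this
  have hdg : deriv g = fun t =>
      (2 * t / s t) * (fderiv ℝ f (φ t) (0, 1) - fderiv ℝ f (φ t) (1, 0)) := by
    funext t
    rw [(hg' t).deriv]
    have hvec : ((-(4 * t / s t) / 2 : ℝ), ((4 * t / s t) / 2 : ℝ))
        = (2 * t / s t) • (((0:ℝ), (1:ℝ)) - ((1:ℝ), (0:ℝ))) := by
      simp [Prod.ext_iff, Prod.smul_def]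
      constructor <;> ring
    rw [hvec, map_smul, map_sub]
    simp
  -- F : the bracket
  set F : ℝ → ℝ := fun t => fderiv ℝ f (φ t) (0, 1) - fderiv ℝ f (φ t) (1, 0) with hFdef
  have hFdiff : DifferentiableAt ℝ F 0 := by
    have hφd : DifferentiableAt ℝ φ 0 := (hφ' 0).differentiableAt
    have hfd : DifferentiableAt ℝ (fun t => fderiv ℝ f (φ t)) 0 := by
      have h1 : ContDiff ℝ 1 (fderiv ℝ f) := hf.fderiv_right (le_refl 2)
      exact ((h1.differentiable (by norm_num)) (φ 0)).comp 0 hφd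
    exact (hfd.clm_apply (differentiableAt_const _)).sub
      (hfd.clm_apply (differentiableAt_const _))
  have hu : HasDerivAt (fun t : ℝ => 2 * t / s t) (2 / (l2 - l1)) 0 := by
    have h1 : HasDerivAt (fun t : ℝ => 2 * t) 2 0 := by
      simpa using (hasDerivAt_id (0:ℝ)).const_mul 2
    have h2 := (h1.div (hs' 0) (hs_pos 0).ne')
    simpa [hs0, Pi.div_def] using h2.congr_deriv (by
      rw [hs0]; have h := hc.ne'; field_simp; ring)
  have hdg' : HasDerivAt (deriv g) (2 / (l2 - l1) * F 0 + (2 * 0 / s 0) * deriv F 0) 0 := by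
    rw [hdg]
    exact hu.mul (hFdiff.hasDerivAt)
  refine ⟨(hg' 0).differentiableAt, hdg'.differentiableAt, ?_, ?_⟩
  · rw [hdg]; simp
  · rw [hdg'.deriv, hFdef]
    simp only [hφ0]
    field_simp
    simp
end

section
/- Let f : ℝ² → ℝ be of class C² and let λ₁ < λ₂ be real numbers. For (t,s) ∈ ℝ² define μ₋(t,s) = ((λ₁+t+λ₂) − √((λ₁+t−λ₂)² + 4s²))/2 and μ₊(t,s) = ((λ₁+t+λ₂) + √((λ₁+t−λ₂)² + 4s²))/2 (the eigenvalues of the symmetric matrix with diagonal entries λ₁+t, λ₂ and off-diagonal entries s), and set G(t,s) := f(μ₋(t,s), μ₊(t,s)). Then G is of class C² in a neighborhood of (0,0) and ∂_t G(0,0) = ∂₁f(λ₁,λ₂), ∂_s G(0,0) = 0, ∂²_{ts} G(0,0) = 0, and ∂²_{ss} G(0,0) = 2·(∂₂f(λ₁,λ₂) − ∂₁f(λ₁,λ₂))/(λ₂ − λ₁). -/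
/-- For `f : ℝ² → ℝ` of class C² and `λ₁ < λ₂`, the function
`G (t,s) = f (μ₋(t,s), μ₊(t,s))`, where `μ₋ ≤ μ₊` are the eigenvalues of the symmetric
matrix with diagonal `λ₁ + t, λ₂` and off-diagonal entries `s`, is of class C² near
`(0,0)` and `∂ₜ G (0,0) = ∂₁ f (λ₁,λ₂)`, `∂ₛ G (0,0) = 0`, `∂²ₜₛ G (0,0) = 0`,
`∂²ₛₛ G (0,0) = 2 (∂₂ f (λ₁,λ₂) - ∂₁ f (λ₁,λ₂)) / (λ₂ - λ₁)`. -/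
theorem stmt_6 (f : ℝ × ℝ → ℝ) (hf : ContDiff ℝ 2 f) (l1 l2 : ℝ) (hl : l1 < l2)
    (G : ℝ × ℝ → ℝ)
    (hG : ∀ t s : ℝ, G (t, s) =
      f (((l1 + t + l2) - Real.sqrt ((l1 + t - l2) ^ 2 + 4 * s ^ 2)) / 2,
         ((l1 + t + l2) + Real.sqrt ((l1 + t - l2) ^ 2 + 4 * s ^ 2)) / 2)) :
    ContDiffAt ℝ 2 G (0, 0) ∧
    fderiv ℝ G (0, 0) (1, 0) = fderiv ℝ f (l1, l2) (1, 0) ∧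
    fderiv ℝ G (0, 0) (0, 1) = 0 ∧
    fderiv ℝ (fun p => fderiv ℝ G p (1, 0)) (0, 0) (0, 1) = 0 ∧
    fderiv ℝ (fun p => fderiv ℝ G p (0, 1)) (0, 0) (0, 1) =
      2 * (fderiv ℝ f (l1, l2) (0, 1) - fderiv ℝ f (l1, l2) (1, 0)) / (l2 - l1) := by
  have hd : l1 - l2 ≠ 0 := by intro h; linarith
  -- q : the expression under the square root
  set q : ℝ × ℝ → ℝ := fun p => (l1 + p.1 - l2) ^ 2 + 4 * p.2 ^ 2 with hq
  have hqC : ContDiff ℝ 2 q := by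
    apply ContDiff.add
    · exact ((contDiff_const.add contDiff_fst).sub contDiff_const).pow 2
    · exact contDiff_const.mul (contDiff_snd.pow 2)
  set μ : ℝ × ℝ → ℝ × ℝ := fun p =>
    ((l1 + p.1 + l2 - Real.sqrt (q p)) / 2, (l1 + p.1 + l2 + Real.sqrt (q p)) / 2) with hμ
  have hGμ : G = fun p => f (μ p) := by
    funext p
    obtain ⟨t, s⟩ := p
    rw [hG]
  have hμC : ∀ p : ℝ × ℝ, q p ≠ 0 → ContDiffAt ℝ 2 μ p := by
    intro p hp
    have hsq : ContDiffAt ℝ 2 (fun p => Real.sqrt (q p)) p :=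
      (Real.contDiffAt_sqrt hp).comp p hqC.contDiffAt
    have hlin : ContDiffAt ℝ 2 (fun p : ℝ × ℝ => l1 + p.1 + l2) p :=
      ((contDiff_const.add contDiff_fst).add contDiff_const).contDiffAt
    exact ((hlin.sub hsq).div_const 2).prodMk ((hlin.add hsq).div_const 2)
  have hGC : ∀ p : ℝ × ℝ, q p ≠ 0 → ContDiffAt ℝ 2 G p := by
    intro p hp
    rw [hGμ]
    exact (hf.contDiffAt).comp p (hμC p hp)
  have h00 : q (0, 0) ≠ 0 := by
    simp only [hq]
    norm_num
    intro h
    exact hd (by nlinarith [sq_nonneg (l1 - l2)])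
  have hGd : ∀ p : ℝ × ℝ, q p ≠ 0 → DifferentiableAt ℝ G p :=
    fun p hp => (hGC p hp).differentiableAt two_ne_zero
  -- evenness in s
  have hGeven : ∀ t s : ℝ, G (t, -s) = G (t, s) := by
    intro t s; rw [hG, hG, neg_pow]; ring_nf
  -- ∂s G (t,0) = 0 for q (t,0) ≠ 0
  have Φzero : ∀ t : ℝ, q (t, 0) ≠ 0 → fderiv ℝ G (t, 0) (0, 1) = 0 := by
    intro t hqt
    have hdiff := hGd (t, 0) hqt
    have hline : HasDerivAt (fun s : ℝ => ((t : ℝ), s)) ((0 : ℝ), (1 : ℝ)) 0 :=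
      (hasDerivAt_const 0 t).prodMk (hasDerivAt_id 0)
    have h1 : HasDerivAt (fun s => G (t, s)) (fderiv ℝ G (t, 0) (0, 1)) 0 :=
      hdiff.hasFDerivAt.comp_hasDerivAt 0 hline
    have h1' : HasDerivAt (fun s => G (t, s)) (fderiv ℝ G (t, 0) (0, 1)) (-0 : ℝ) := by
      rw [neg_zero]; exact h1
    have h2 : HasDerivAt (fun s : ℝ => G (t, -s)) (-(fderiv ℝ G (t, 0) (0, 1))) 0 := by
      have := h1'.comp 0 (hasDerivAt_neg (0 : ℝ))
      simpa [Function.comp_def, mul_comm] using this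
    have h3 : HasDerivAt (fun s => G (t, s)) (-(fderiv ℝ G (t, 0) (0, 1))) 0 := by
      simpa only [hGeven] using h2
    have := h1.unique h3
    linarith
  -- basic line for t-direction
  have hline_t : HasDerivAt (fun t : ℝ => ((t : ℝ), (0 : ℝ))) ((1 : ℝ), (0 : ℝ)) 0 :=
    (hasDerivAt_id 0).prodMk (hasDerivAt_const 0 0)
  -- Part 2
  have part2 : fderiv ℝ G (0, 0) (1, 0) = fderiv ℝ f (l1, l2) (1, 0) := by
    have h1 : HasDerivAt (fun t => G (t, 0)) (fderiv ℝ G (0, 0) (1, 0)) 0 := by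
      have := (hGd _ h00).hasFDerivAt.comp_hasDerivAt_of_eq
        (f := fun t : ℝ => ((t : ℝ), (0 : ℝ))) (x := 0) hline_t rfl
      simpa [Function.comp_def] using this
    have hline2 : HasDerivAt (fun t : ℝ => (l1 + t, l2)) ((1 : ℝ), (0 : ℝ)) 0 := by
      have := ((hasDerivAt_const (0:ℝ) l1).add (hasDerivAt_id 0)).prodMk (hasDerivAt_const (0:ℝ) l2)
      simpa using this
    have h2 : HasDerivAt (fun t => f (l1 + t, l2)) (fderiv ℝ f (l1, l2) (1, 0)) 0 := by
      have hfd : DifferentiableAt ℝ f (l1 + 0, l2) := by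
        simpa using (hf.differentiable two_ne_zero) (l1, l2)
      have := hfd.hasFDerivAt.comp_hasDerivAt 0 hline2
      simpa [Function.comp_def] using this
    have hEq : (fun t => G (t, 0)) =ᶠ[nhds (0 : ℝ)] fun t => f (l1 + t, l2) := by
      have hmem : Set.Iio (l2 - l1) ∈ nhds (0 : ℝ) := Iio_mem_nhds (by linarith)
      filter_upwards [hmem] with t ht
      rw [hG]
      have hnp : l1 + t - l2 ≤ 0 := by simp at ht; linarith
      have hs : Real.sqrt ((l1 + t - l2) ^ 2 + 4 * 0 ^ 2) = -(l1 + t - l2) := by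
        rw [show (l1 + t - l2) ^ 2 + 4 * (0:ℝ) ^ 2 = (l1 + t - l2) ^ 2 by ring,
          Real.sqrt_sq_eq_abs, abs_of_nonpos hnp]
      rw [hs]
      congr 1 <;> ring
    calc fderiv ℝ G (0, 0) (1, 0) = deriv (fun t => G (t, 0)) 0 := h1.deriv.symm
      _ = deriv (fun t => f (l1 + t, l2)) 0 := hEq.deriv_eq
      _ = fderiv ℝ f (l1, l2) (1, 0) := h2.deriv
  -- second derivative data
  have hfd2 : DifferentiableAt ℝ (fderiv ℝ G) (0, 0) :=
    ((hGC _ h00).fderiv_right (m := 1) (by norm_num)).differentiableAt one_ne_zero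
  have happly : ∀ v w : ℝ × ℝ, fderiv ℝ (fun p => fderiv ℝ G p v) (0, 0) w =
      fderiv ℝ (fderiv ℝ G) (0, 0) w v := by
    intro v w
    rw [fderiv_clm_apply hfd2 (differentiableAt_const v)]
    simp
  have hsymm : ∀ v w : ℝ × ℝ, fderiv ℝ (fderiv ℝ G) (0, 0) v w =
      fderiv ℝ (fderiv ℝ G) (0, 0) w v :=
    (hGC _ h00).isSymmSndFDerivAt (by simp)
  -- Part 4
  have part4 : fderiv ℝ (fun p => fderiv ℝ G p (1, 0)) (0, 0) (0, 1) = 0 := by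
    rw [happly, hsymm]
    rw [← happly]
    have hΦd : DifferentiableAt ℝ (fun p => fderiv ℝ G p (0, 1)) (0, 0) :=
      hfd2.clm_apply (differentiableAt_const _)
    have h1 : HasDerivAt (fun t => fderiv ℝ G (t, 0) (0, 1))
        (fderiv ℝ (fun p => fderiv ℝ G p (0, 1)) (0, 0) (1, 0)) 0 := by
      have := hΦd.hasFDerivAt.comp_hasDerivAt_of_eq
        (f := fun t : ℝ => ((t : ℝ), (0 : ℝ))) (x := 0) hline_t rfl
      simpa [Function.comp_def] using this
    have hEq : (fun t => fderiv ℝ G (t, 0) (0, 1)) =ᶠ[nhds (0 : ℝ)] fun _ => 0 := by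
      have hmem : Set.Iio (l2 - l1) ∈ nhds (0 : ℝ) := Iio_mem_nhds (by linarith)
      filter_upwards [hmem] with t ht
      apply Φzero
      simp only [hq]
      simp at ht ⊢
      intro h; nlinarith
    calc fderiv ℝ (fun p => fderiv ℝ G p (0, 1)) (0, 0) (1, 0)
        = deriv (fun t => fderiv ℝ G (t, 0) (0, 1)) 0 := h1.deriv.symm
      _ = deriv (fun _ : ℝ => (0 : ℝ)) 0 := hEq.deriv_eq
      _ = 0 := deriv_const _ _
  -- Part 5: one-dimensional computation along s
  set R : ℝ → ℝ := fun s => Real.sqrt ((l1 - l2) ^ 2 + 4 * s ^ 2) with hR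
  have hRpos : ∀ s : ℝ, 0 < (l1 - l2) ^ 2 + 4 * s ^ 2 := by
    intro s
    have h1 : (l1 - l2) ^ 2 ≠ 0 := pow_ne_zero 2 hd
    have h2 : 0 ≤ (l1 - l2) ^ 2 := sq_nonneg _
    nlinarith [sq_nonneg s]
  have hRne : ∀ s : ℝ, R s ≠ 0 := fun s => (Real.sqrt_pos.mpr (hRpos s)).ne'
  have hR0 : R 0 = l2 - l1 := by
    rw [hR]
    simp only
    rw [show (l1 - l2) ^ 2 + 4 * (0:ℝ) ^ 2 = (l1 - l2) ^ 2 by ring,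
      Real.sqrt_sq_eq_abs, abs_of_nonpos (by linarith), neg_sub]
  have hRs : ∀ s : ℝ, HasDerivAt R (4 * s / R s) s := by
    intro s
    have hinner : HasDerivAt (fun s : ℝ => (l1 - l2) ^ 2 + 4 * s ^ 2) (8 * s) s := by
      have := ((hasDerivAt_pow 2 s).const_mul 4).const_add ((l1 - l2) ^ 2)
      refine this.congr_deriv ?_
      simp; ring
    have hsq : Real.sqrt ((l1 - l2) ^ 2 + 4 * s ^ 2) ≠ 0 :=
      (Real.sqrt_pos.mpr (hRpos s)).ne'
    have h2 := (Real.hasDerivAt_sqrt (hRpos s).ne').comp s hinner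
    simp only [Function.comp_def] at h2
    simp only [hR]
    refine h2.congr_deriv ?_
    field_simp
    ring
  set m : ℝ → ℝ × ℝ := fun s => ((l1 + l2 - R s) / 2, (l1 + l2 + R s) / 2) with hm
  have hm0 : m 0 = (l1, l2) := by
    rw [hm]; simp only [hR0, Prod.mk.injEq]; constructor <;> ring
  have hmd : ∀ s : ℝ, HasDerivAt m (-(4 * s / R s) / 2, (4 * s / R s) / 2) s := by
    intro s
    have h1 : HasDerivAt (fun s => (l1 + l2 - R s) / 2) (-(4 * s / R s) / 2) s := by
      have := ((hasDerivAt_const s (l1 + l2)).sub (hRs s)).div_const 2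
      refine this.congr_deriv ?_; ring
    have h2 : HasDerivAt (fun s => (l1 + l2 + R s) / 2) ((4 * s / R s) / 2) s := by
      have := ((hasDerivAt_const s (l1 + l2)).add (hRs s)).div_const 2
      refine this.congr_deriv ?_; ring
    exact h1.prodMk h2
  have hgm : ∀ s : ℝ, G (0, s) = f (m s) := by
    intro s
    rw [hG, hm]
    norm_num
    rfl
  -- deriv of g s = G(0,s)
  have hgd : ∀ s : ℝ, HasDerivAt (fun s => G (0, s))
      ((2 * s / R s) * (fderiv ℝ f (m s) ((-1 : ℝ), (1 : ℝ)))) s := by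
    intro s
    have hfd : DifferentiableAt ℝ f (m s) := (hf.differentiable two_ne_zero) (m s)
    have h1 : HasDerivAt (fun s => f (m s))
        (fderiv ℝ f (m s) (-(4 * s / R s) / 2, (4 * s / R s) / 2)) s :=
      hfd.hasFDerivAt.comp_hasDerivAt s (hmd s)
    have hvec : ((-(4 * s / R s) / 2, (4 * s / R s) / 2) : ℝ × ℝ)
        = (2 * s / R s) • ((-1 : ℝ), (1 : ℝ)) := by
      rw [Prod.smul_mk, Prod.mk.injEq]
      constructor <;> (simp; ring)
    have h2 : HasDerivAt (fun s => f (m s))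
        ((2 * s / R s) * (fderiv ℝ f (m s) ((-1 : ℝ), (1 : ℝ)))) s := by
      rw [← smul_eq_mul, ← (fderiv ℝ f (m s)).map_smul, ← hvec]
      exact h1
    have : (fun s => G (0, s)) = fun s => f (m s) := funext hgm
    rw [this]
    exact h2
  -- fderiv G (0,s) (0,1) = deriv g s
  have hΦg : ∀ s : ℝ, fderiv ℝ G (0, s) (0, 1) =
      (2 * s / R s) * (fderiv ℝ f (m s) ((-1 : ℝ), (1 : ℝ))) := by
    intro s
    have hqs : q (0, s) ≠ 0 := by
      simp only [hq]
      have := hRpos s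
      norm_num
      nlinarith
    have hline : HasDerivAt (fun u : ℝ => ((0 : ℝ), u)) ((0 : ℝ), (1 : ℝ)) s :=
      (hasDerivAt_const s (0:ℝ)).prodMk (hasDerivAt_id s)
    have h1 : HasDerivAt (fun u => G (0, u)) (fderiv ℝ G (0, s) (0, 1)) s :=
      (hGd _ hqs).hasFDerivAt.comp_hasDerivAt s hline
    exact h1.unique (hgd s)
  -- Part 3
  have part3 : fderiv ℝ G (0, 0) (0, 1) = 0 := Φzero 0 h00
  -- Part 5
  have part5 : fderiv ℝ (fun p => fderiv ℝ G p (0, 1)) (0, 0) (0, 1) =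
      2 * (fderiv ℝ f (l1, l2) (0, 1) - fderiv ℝ f (l1, l2) (1, 0)) / (l2 - l1) := by
    have hΦd : DifferentiableAt ℝ (fun p => fderiv ℝ G p (0, 1)) (0, 0) :=
      hfd2.clm_apply (differentiableAt_const _)
    have hline : HasDerivAt (fun s : ℝ => ((0 : ℝ), s)) ((0 : ℝ), (1 : ℝ)) 0 :=
      (hasDerivAt_const 0 (0:ℝ)).prodMk (hasDerivAt_id 0)
    have h1 : HasDerivAt (fun s => fderiv ℝ G (0, s) (0, 1))
        (fderiv ℝ (fun p => fderiv ℝ G p (0, 1)) (0, 0) (0, 1)) 0 :=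
      hΦd.hasFDerivAt.comp_hasDerivAt 0 hline
    -- compute derivative of ψ = fun s => (2 s / R s) * F (m s)
    set F : ℝ × ℝ → ℝ := fun x => fderiv ℝ f x ((-1 : ℝ), (1 : ℝ)) with hF
    have hFd : DifferentiableAt ℝ F (m 0) := by
      have h1 : ContDiffAt ℝ 1 (fderiv ℝ f) (m 0) :=
        hf.contDiffAt.fderiv_right (m := 1) (by norm_num)
      exact (h1.differentiableAt one_ne_zero).clm_apply (differentiableAt_const _)
    have hmdiff : DifferentiableAt ℝ m 0 := (hmd 0).differentiableAt
    have hFm : DifferentiableAt ℝ (fun s => F (m s)) 0 := hFd.comp 0 hmdiff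
    have hu : HasDerivAt (fun s : ℝ => 2 * s / R s) (2 / (l2 - l1)) 0 := by
      have := ((hasDerivAt_id (0:ℝ)).const_mul 2).div (hRs 0) (hRne 0)
      refine this.congr_deriv ?_
      rw [hR0]
      have hne : l2 - l1 ≠ 0 := sub_ne_zero_of_ne (ne_of_gt hl)
      field_simp
      ring
    have hψ : HasDerivAt (fun s => (2 * s / R s) * F (m s))
        (2 / (l2 - l1) * F (l1, l2)) 0 := by
      have := hu.mul hFm.hasDerivAt
      refine this.congr_deriv ?_
      rw [hm0]
      simp [hRne 0]
    have heq : (fun s => fderiv ℝ G (0, s) (0, 1)) = fun s => (2 * s / R s) * F (m s) :=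
      funext hΦg
    have hval : fderiv ℝ (fun p => fderiv ℝ G p (0, 1)) (0, 0) (0, 1)
        = 2 / (l2 - l1) * F (l1, l2) := by
      have h2 := h1
      rw [heq] at h2
      exact h2.unique hψ
    rw [hval]
    have hFval : F (l1, l2) = fderiv ℝ f (l1, l2) (0, 1) - fderiv ℝ f (l1, l2) (1, 0) := by
      have hvec : ((-1 : ℝ), (1 : ℝ)) = ((0 : ℝ), (1 : ℝ)) - ((1 : ℝ), (0 : ℝ)) := by
        norm_num
      simp only [hF, hvec, map_sub]
    rw [hFval]
    ring
  exact ⟨hGC _ h00, part2, part3, part4, part5⟩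
end

section
/- Let f : ℝ² → ℝ be symmetric (f(a,b) = f(b,a) for all a, b) and of class C², and let λ ∈ ℝ. For (t,s) ∈ ℝ² define μ₊(t,s) = λ + (t + √(t² + 4s²))/2 and μ₋(t,s) = λ + (t − √(t² + 4s²))/2 (the eigenvalues of the symmetric matrix with diagonal entries λ+t, λ and off-diagonal entries s), and set G(t,s) := f(μ₊(t,s), μ₋(t,s)). Then, as (t,s) → (0,0), G(t,s) = f(λ,λ) + t·∂₁f(λ,λ) + ((t² + 2s²)/2)·∂²₁₁f(λ,λ) − s²·∂²₁₂f(λ,λ) + o(t² + s²). In particular the second-order Taylor coefficients of G at the origin in t·t, t·s and s·s are ∂²₁₁f(λ,λ), 0 and 2(∂²₁₁f(λ,λ) − ∂²₁₂f(λ,λ)) respectively. -/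
open Asymptotics

set_option maxHeartbeats 1000000 in
lemma aux_taylor {E : Type*} [NormedAddCommGroup E] [NormedSpace ℝ E] {f : E → ℝ}
    (hf : ContDiff ℝ 2 f) (a : E) :
    (fun x => f x - f a - fderiv ℝ f a (x - a)
        - (1 / 2 : ℝ) * fderiv ℝ (fderiv ℝ f) a (x - a) (x - a))
      =o[nhds a] fun x => ‖x - a‖ ^ 2 := by
  have hdf : Differentiable ℝ f := hf.differentiable two_ne_zero
  have hf1 : ContDiff ℝ 1 (fderiv ℝ f) := hf.fderiv_right (le_refl 2)
  have hd2 : HasFDerivAt (fderiv ℝ f) (fderiv ℝ (fderiv ℝ f) a) a :=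
    ((hf1.differentiable one_ne_zero) a).hasFDerivAt
  set B := fderiv ℝ (fderiv ℝ f) a with hB
  have hBsymm : ∀ v w, B v w = B w v :=
    second_derivative_symmetric (fun y => (hdf y).hasFDerivAt) hd2
  have hL : ∀ y : E, HasFDerivAt
      (fun x => f x - f a - fderiv ℝ f a (x - a)
          - (1 / 2 : ℝ) * B (x - a) (x - a))
      (fderiv ℝ f y - fderiv ℝ f a - B (y - a)) y := by
    intro y
    have h1 : HasFDerivAt f (fderiv ℝ f y) y := (hdf y).hasFDerivAt
    have h2 : HasFDerivAt (fun x : E => fderiv ℝ f a (x - a)) (fderiv ℝ f a) y := by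
      have := ((fderiv ℝ f a).hasFDerivAt (x := y)).sub_const (fderiv ℝ f a a)
      simpa [map_sub] using this
    have h3 : HasFDerivAt (fun x : E => B (x - a) (x - a))
        ((B.isBoundedBilinearMap.deriv (y - a, y - a)).comp
          ((ContinuousLinearMap.id ℝ E).prod (ContinuousLinearMap.id ℝ E))) y := by
      exact (B.isBoundedBilinearMap.hasFDerivAt (y - a, y - a)).comp (f := fun x : E => (x - a, x - a)) y
        (HasFDerivAt.prodMk ((hasFDerivAt_id y).sub_const a) ((hasFDerivAt_id y).sub_const a))
    have h4 := ((h1.sub_const (f a)).sub h2).sub (h3.const_smul (1 / 2 : ℝ))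
    refine h4.congr_fderiv ?_
    ext v
    simp [ContinuousLinearMap.smul_apply, IsBoundedBilinearMap.deriv_apply, smul_eq_mul,
      hBsymm v (y - a)]
    ring
  rw [isLittleO_iff]
  intro c hc
  have hsmall := (hasFDerivAt_iff_isLittleO_nhds_zero.mp hd2)
  have hsm2 : (fun y => fderiv ℝ f y - fderiv ℝ f a - B (y - a)) =o[nhds a] fun y => y - a := by
    simpa using (hd2.isLittleO)
  rw [isLittleO_iff] at hsm2
  have hev := hsm2 (half_pos hc)
  rw [Metric.eventually_nhds_iff] at hev
  obtain ⟨δ, hδ, hδev⟩ := hev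
  rw [Metric.eventually_nhds_iff]
  refine ⟨δ, hδ, fun x hx => ?_⟩
  have hxa : ‖x - a‖ < δ := by rwa [← dist_eq_norm]
  have key := Convex.norm_image_sub_le_of_norm_hasFDerivWithin_le
    (f := fun x => f x - f a - fderiv ℝ f a (x - a) - (1 / 2 : ℝ) * B (x - a) (x - a))
    (f' := fun y => fderiv ℝ f y - fderiv ℝ f a - B (y - a))
    (C := c / 2 * ‖x - a‖) (s := Metric.closedBall a ‖x - a‖)
    (fun y hy => (hL y).hasFDerivWithinAt)
    (fun y hy => by
      have hya : ‖y - a‖ ≤ ‖x - a‖ := by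
        rw [Metric.mem_closedBall, dist_eq_norm] at hy; exact hy
      have : dist y a < δ := by rw [dist_eq_norm]; exact lt_of_le_of_lt hya hxa
      calc ‖fderiv ℝ f y - fderiv ℝ f a - B (y - a)‖ ≤ c / 2 * ‖y - a‖ := hδev this
        _ ≤ c / 2 * ‖x - a‖ := by gcongr)
    (convex_closedBall a ‖x - a‖)
    (Metric.mem_closedBall_self (norm_nonneg _))
    (by rw [Metric.mem_closedBall, dist_eq_norm])
  simp only [sub_self, map_zero, mul_zero, sub_zero] at key
  calc ‖f x - f a - fderiv ℝ f a (x - a) - (1 / 2 : ℝ) * B (x - a) (x - a)‖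
      ≤ c / 2 * ‖x - a‖ * ‖x - a‖ := by simpa using key
    _ ≤ c * ‖‖x - a‖ ^ 2‖ := by
        rw [norm_pow, norm_norm]
        nlinarith [norm_nonneg (x - a), hc.le]

set_option maxHeartbeats 1000000 in
/-- For `f : ℝ² → ℝ` symmetric and C² and `λ ∈ ℝ`, the function
`G (t,s) = f (μ₊(t,s), μ₋(t,s))`, where `μ₊ ≥ μ₋` are the eigenvalues of the symmetric
matrix with diagonal `λ + t, λ` and off-diagonal entries `s`, admits the second-order
expansion
`G (t,s) = f (λ,λ) + t ∂₁f(λ,λ) + ((t² + 2s²)/2) ∂²₁₁f(λ,λ) - s² ∂²₁₂f(λ,λ) + o(t² + s²)`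
as `(t,s) → (0,0)`. -/
theorem stmt_7 (f : ℝ × ℝ → ℝ) (hsym : ∀ a b : ℝ, f (a, b) = f (b, a))
    (hf : ContDiff ℝ 2 f) (l : ℝ) (G : ℝ × ℝ → ℝ)
    (hG : ∀ t s : ℝ, G (t, s) =
      f (l + (t + Real.sqrt (t ^ 2 + 4 * s ^ 2)) / 2,
         l + (t - Real.sqrt (t ^ 2 + 4 * s ^ 2)) / 2)) :
    (fun p : ℝ × ℝ =>
        G p - (f (l, l) + p.1 * fderiv ℝ f (l, l) (1, 0)
          + ((p.1 ^ 2 + 2 * p.2 ^ 2) / 2) *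
              fderiv ℝ (fun q => fderiv ℝ f q (1, 0)) (l, l) (1, 0)
          - p.2 ^ 2 * fderiv ℝ (fun q => fderiv ℝ f q (1, 0)) (l, l) (0, 1)))
      =o[nhds ((0 : ℝ), (0 : ℝ))] (fun p : ℝ × ℝ => p.1 ^ 2 + p.2 ^ 2) := by
  have hdf : Differentiable ℝ f := hf.differentiable two_ne_zero
  have hf1 : ContDiff ℝ 1 (fderiv ℝ f) := hf.fderiv_right (le_refl 2)
  set a : ℝ × ℝ := (l, l) with ha
  have hd2 : HasFDerivAt (fderiv ℝ f) (fderiv ℝ (fderiv ℝ f) a) a :=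
    ((hf1.differentiable one_ne_zero) a).hasFDerivAt
  set B := fderiv ℝ (fderiv ℝ f) a with hBdef
  have hBsymm : ∀ v w, B v w = B w v :=
    second_derivative_symmetric (fun y => (hdf y).hasFDerivAt) hd2
  set S : (ℝ × ℝ) →L[ℝ] ℝ × ℝ :=
    (ContinuousLinearEquiv.prodComm ℝ ℝ ℝ : (ℝ × ℝ) ≃L[ℝ] ℝ × ℝ).toContinuousLinearMap with hS
  have hSapp : ∀ q : ℝ × ℝ, S q = (q.2, q.1) := fun q => rfl
  have hfS : ∀ q : ℝ × ℝ, f (S q) = f q := by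
    intro ⟨x, y⟩; exact (hsym x y).symm
  -- derivative swap relation
  have hder : ∀ q : ℝ × ℝ, fderiv ℝ f q = (fderiv ℝ f (S q)).comp S := by
    intro q
    have h1 : HasFDerivAt (fun x => f (S x)) ((fderiv ℝ f (S q)).comp S) q :=
      ((hdf (S q)).hasFDerivAt).comp q S.hasFDerivAt
    have h2 : (fun x => f (S x)) = f := funext hfS
    rw [h2] at h1
    exact h1.fderiv
  have hSa : S a = a := rfl
  have hP : fderiv ℝ f a (0, 1) = fderiv ℝ f a (1, 0) := by
    conv_lhs => rw [hder a, hSa]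
    rfl
  -- second derivative via evaluation
  have hEval : ∀ w : ℝ × ℝ, fderiv ℝ (fun q => fderiv ℝ f q w) a =
      (ContinuousLinearMap.apply ℝ ℝ w).comp B := by
    intro w
    exact (((ContinuousLinearMap.apply ℝ ℝ w).hasFDerivAt).comp a hd2).fderiv
  have hdiff1 : Differentiable ℝ (fun q => fderiv ℝ f q (1, 0)) := by
    exact fun q => (((ContinuousLinearMap.apply ℝ ℝ ((1:ℝ),(0:ℝ))).hasFDerivAt).comp q
      ((hf1.differentiable one_ne_zero q).hasFDerivAt)).differentiableAt
  have hBswap : B (0, 1) (0, 1) = B (1, 0) (1, 0) := by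
    have h1 : (fun q : ℝ × ℝ => fderiv ℝ f q ((0:ℝ), (1:ℝ))) =
        fun q => fderiv ℝ f (S q) ((1:ℝ), (0:ℝ)) := by
      funext q
      rw [hder q]
      rfl
    have h2 : HasFDerivAt (fun q : ℝ × ℝ => fderiv ℝ f (S q) ((1:ℝ), (0:ℝ)))
        ((fderiv ℝ (fun q => fderiv ℝ f q ((1:ℝ), (0:ℝ))) (S a)).comp S) a :=
      ((hdiff1 (S a)).hasFDerivAt).comp a S.hasFDerivAt
    rw [← h1] at h2
    have h3 := h2.fderiv
    have h4 := congrArg (fun (L : (ℝ × ℝ) →L[ℝ] ℝ) => L ((0:ℝ), (1:ℝ))) h3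
    simp only [ContinuousLinearMap.comp_apply] at h4
    rw [hEval ((0:ℝ),(1:ℝ))] at h4
    rw [hSa, hEval ((1:ℝ),(0:ℝ))] at h4
    simpa [hSapp] using h4
  have hBmix : B (1, 0) (0, 1) = B (0, 1) (1, 0) := hBsymm _ _
  -- the map m
  set m : ℝ × ℝ → ℝ × ℝ := fun p =>
    (l + (p.1 + Real.sqrt (p.1 ^ 2 + 4 * p.2 ^ 2)) / 2,
     l + (p.1 - Real.sqrt (p.1 ^ 2 + 4 * p.2 ^ 2)) / 2) with hm
  have hGm : ∀ p : ℝ × ℝ, G p = f (m p) := fun p => hG p.1 p.2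
  have hmc : Continuous m := by fun_prop
  have htend : Filter.Tendsto m (nhds ((0:ℝ), (0:ℝ))) (nhds a) := by
    have : m ((0:ℝ), (0:ℝ)) = a := by simp [hm, ha]
    exact this ▸ hmc.tendsto _
  have step1 := (aux_taylor hf a).comp_tendsto htend
  -- compare norms
  have step2 : (fun p : ℝ × ℝ => ‖m p - a‖ ^ 2) =O[nhds ((0:ℝ), (0:ℝ))]
      fun p : ℝ × ℝ => p.1 ^ 2 + p.2 ^ 2 := by
    refine IsBigO.of_bound 2 (Filter.Eventually.of_forall fun p => ?_)
    obtain ⟨t, s⟩ := p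
    have hr : Real.sqrt (t ^ 2 + 4 * s ^ 2) ^ 2 = t ^ 2 + 4 * s ^ 2 :=
      Real.sq_sqrt (by positivity)
    set r := Real.sqrt (t ^ 2 + 4 * s ^ 2)
    have hmp : m (t, s) - a = ((t + r) / 2, (t - r) / 2) := by
      simp [hm, ha, Prod.mk_sub_mk, r]
    rw [hmp]
    have hnorm : ‖(((t + r) / 2 : ℝ), ((t - r) / 2 : ℝ))‖ ^ 2 ≤
        ((t + r) / 2) ^ 2 + ((t - r) / 2) ^ 2 := by
      rw [Prod.norm_def]
      rcases le_total ‖((t + r) / 2 : ℝ)‖ ‖((t - r) / 2 : ℝ)‖ with h | h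
      · rw [sup_eq_right.mpr h, Real.norm_eq_abs, sq_abs]
        nlinarith [sq_nonneg ((t + r) / 2)]
      · rw [sup_eq_left.mpr h, Real.norm_eq_abs, sq_abs]
        nlinarith [sq_nonneg ((t - r) / 2)]
    have h2 : ((t + r) / 2) ^ 2 + ((t - r) / 2) ^ 2 = t ^ 2 + 2 * s ^ 2 := by
      linear_combination hr / 2
    rw [Real.norm_eq_abs, Real.norm_eq_abs, abs_of_nonneg (by positivity),
      abs_of_nonneg (by positivity : (0:ℝ) ≤ t ^ 2 + s ^ 2)]
    nlinarith [hnorm, h2]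
  -- function equality
  have hfun : (fun p : ℝ × ℝ =>
        G p - (f (l, l) + p.1 * fderiv ℝ f (l, l) (1, 0)
          + ((p.1 ^ 2 + 2 * p.2 ^ 2) / 2) *
              fderiv ℝ (fun q => fderiv ℝ f q (1, 0)) (l, l) (1, 0)
          - p.2 ^ 2 * fderiv ℝ (fun q => fderiv ℝ f q (1, 0)) (l, l) (0, 1))) =
      fun p => f (m p) - f a - fderiv ℝ f a (m p - a)
        - (1 / 2 : ℝ) * B (m p - a) (m p - a) := by
    funext p
    obtain ⟨t, s⟩ := p
    have hr : Real.sqrt (t ^ 2 + 4 * s ^ 2) ^ 2 = t ^ 2 + 4 * s ^ 2 :=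
      Real.sq_sqrt (by positivity)
    set r := Real.sqrt (t ^ 2 + 4 * s ^ 2)
    set u : ℝ := (t + r) / 2
    set v : ℝ := (t - r) / 2
    have hmp : m (t, s) - a = (u, v) := by simp [hm, ha, Prod.mk_sub_mk, u, v, r]
    have hA : fderiv ℝ (fun q => fderiv ℝ f q ((1:ℝ), (0:ℝ))) a ((1:ℝ), (0:ℝ)) =
        B (1, 0) (1, 0) := by rw [hEval]; rfl
    have hM : fderiv ℝ (fun q => fderiv ℝ f q ((1:ℝ), (0:ℝ))) a ((0:ℝ), (1:ℝ)) =
        B (0, 1) (1, 0) := by rw [hEval]; rfl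
    have hdecomp : ((u, v) : ℝ × ℝ) = u • ((1:ℝ), (0:ℝ)) + v • ((0:ℝ), (1:ℝ)) := by
      simp [Prod.ext_iff]
    have h1 : fderiv ℝ f a (u, v) = (u + v) * fderiv ℝ f a (1, 0) := by
      rw [hdecomp, map_add, map_smul, map_smul, hP]; simp; ring
    have h2 : B (u, v) (u, v) =
        (u ^ 2 + v ^ 2) * B (1, 0) (1, 0) + 2 * (u * v) * B (0, 1) (1, 0) := by
      rw [hdecomp]
      simp only [map_add, map_smul, ContinuousLinearMap.add_apply,
        ContinuousLinearMap.smul_apply, smul_eq_mul]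
      rw [hBswap, hBmix]
      ring
    rw [hGm (t, s), hmp, h1, h2, hA, hM, ← ha]
    have huv : u + v = t := by simp [u, v]; ring
    have huv2 : u ^ 2 + v ^ 2 = t ^ 2 + 2 * s ^ 2 := by
      simp only [u, v]; linear_combination hr / 2
    have huv3 : u * v = -s ^ 2 := by
      simp only [u, v]; linear_combination -hr / 4
    rw [huv, huv2, huv3]
    ring
  rw [hfun]
  exact step1.trans_isBigO step2
end

section
/- Let n ≥ 2, let φ : ℝ^{n−1} → ℝ be of class C¹ in a neighborhood of a point x₀' ∈ ℝ^{n−1}, set x₀ = (x₀', φ(x₀')) ∈ ℝⁿ, and let u : ℝⁿ → ℝ be of class C² in a neighborhood of x₀ with u(x', φ(x')) = 0 and |∇u(x', φ(x'))|² = κ (a constant) for all x' in a neighborhood of x₀'. Assume ∂_i u(x₀) = 0 for every i < n and ∂_n u(x₀) ≠ 0. Then ∂²_{in}u(x₀) = 0 for every i < n; that is, together with the vanishing of ∂²_{ij}u(x₀) + ∂_n u(x₀) ∂²_{ij}φ(x₀') for i,j < n, the Hessian ∇²u(x₀) is diagonal whenever ∇²φ(x₀') is diagonal. -/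
/-- (dimension `n = m + 1`, with `m ≥ 1`, so `n ≥ 2`). Let
`φ : ℝ^{n-1} → ℝ` be C¹ near `x₀'`, `x₀ = (x₀', φ x₀')`, and let `u : ℝⁿ → ℝ` be C² near
`x₀` with `u (x', φ x') = 0` and `|∇u (x', φ x')|² = κ` (a constant) for `x'` near `x₀'`.
If `∂ᵢ u (x₀) = 0` for all `i < n` and `∂ₙ u (x₀) ≠ 0`, then `∂²ᵢₙ u (x₀) = 0` for every
`i < n`. -/
theorem stmt_10 (m : ℕ) (hm : 1 ≤ m)
    (φ : (Fin m → ℝ) → ℝ) (x₀' : Fin m → ℝ)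
    (u : (Fin (m + 1) → ℝ) → ℝ) (x₀ : Fin (m + 1) → ℝ) (κ : ℝ)
    (hx₀ : x₀ = Fin.snoc x₀' (φ x₀'))
    (hφ : ContDiffAt ℝ 1 φ x₀')
    (hu : ContDiffAt ℝ 2 u x₀)
    (hzero : ∀ᶠ x' in nhds x₀', u (Fin.snoc x' (φ x')) = 0)
    (hgradsq : ∀ᶠ x' in nhds x₀',
      ∑ j : Fin (m + 1), (fderiv ℝ u (Fin.snoc x' (φ x')) (Pi.single j 1)) ^ 2 = κ)
    (hgrad : ∀ i : Fin m, fderiv ℝ u x₀ (Pi.single i.castSucc 1) = 0)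
    (hlast : fderiv ℝ u x₀ (Pi.single (Fin.last m) 1) ≠ 0) :
    ∀ i : Fin m,
      fderiv ℝ (fun y => fderiv ℝ u y (Pi.single i.castSucc 1)) x₀
        (Pi.single (Fin.last m) 1) = 0 := by
  have hφd : DifferentiableAt ℝ φ x₀' := hφ.differentiableAt one_ne_zero
  set Dφ := fderiv ℝ φ x₀' with hDφdef
  set ψ : (Fin m → ℝ) → (Fin (m+1) → ℝ) := fun x' => Fin.snoc x' (φ x') with hψdef
  set ψ' : (Fin m → ℝ) →L[ℝ] (Fin (m+1) → ℝ) :=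
    ContinuousLinearMap.pi (fun j => Fin.lastCases Dφ (fun k => ContinuousLinearMap.proj k) j)
    with hψ'def
  have hψd : HasFDerivAt ψ ψ' x₀' := by
    rw [hψ'def]
    refine hasFDerivAt_pi.2 ?_
    intro j
    induction j using Fin.lastCases with
    | last => simpa [hψdef] using hφd.hasFDerivAt
    | cast k => simpa [hψdef] using hasFDerivAt_apply k x₀'
  have hψ'app : ∀ v : Fin m → ℝ, ψ' v = Fin.snoc v (Dφ v) := by
    intro v
    funext j
    induction j using Fin.lastCases with
    | last => simp [hψ'def]
    | cast k => simp [hψ'def]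
  have hx0 : ψ x₀' = x₀ := by rw [hx₀]
  have hsnoc : ∀ (v : Fin m → ℝ) (c : ℝ),
      (Fin.snoc v c : Fin (m+1) → ℝ)
        = (Fin.snoc v 0 : Fin (m+1) → ℝ)
          + c • (Pi.single (Fin.last m) 1 : Fin (m+1) → ℝ) := by
    intro v c
    funext j
    induction j using Fin.lastCases with
    | last => simp
    | cast k => simp [Pi.single_apply, (Fin.castSucc_lt_last k).ne]
  have hsnoc0 : ∀ i : Fin m,
      (Fin.snoc (Pi.single i 1) 0 : Fin (m+1) → ℝ) = Pi.single i.castSucc 1 := by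
    intro i
    funext j
    induction j using Fin.lastCases with
    | last => simp [Pi.single_apply, (Fin.castSucc_lt_last i).ne']
    | cast k => simp [Pi.single_apply, Fin.castSucc_inj]
  -- Step 1 : tangential gradient of φ vanishes
  have hud : DifferentiableAt ℝ u x₀ := hu.differentiableAt two_ne_zero
  have hu' : HasFDerivAt u (fderiv ℝ u x₀) (ψ x₀') := hx0 ▸ hud.hasFDerivAt
  have hcomp : HasFDerivAt (fun x' => u (ψ x')) ((fderiv ℝ u x₀).comp ψ') x₀' :=
    hu'.comp x₀' hψd
  have hzero' : fderiv ℝ (fun x' => u (ψ x')) x₀' = 0 := by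
    have h : (fun x' => u (ψ x')) =ᶠ[nhds x₀'] fun _ => (0:ℝ) := hzero
    rw [h.fderiv_eq, fderiv_fun_const]
    rfl
  have hD0 : (fderiv ℝ u x₀).comp ψ' = 0 := by rw [← hcomp.fderiv, hzero']
  have hDφ0 : ∀ i : Fin m, Dφ (Pi.single i 1) = 0 := by
    intro i
    have h1 : fderiv ℝ u x₀ (ψ' (Pi.single i 1)) = 0 := by
      have := congrArg (fun T => T (Pi.single i 1)) hD0
      simpa using this
    rw [hψ'app, hsnoc, map_add, hsnoc0, hgrad i, map_smul] at h1
    simp only [zero_add, smul_eq_mul] at h1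
    rcases mul_eq_zero.1 h1 with h | h
    · exact h
    · exact absurd h hlast
  have hψ'single : ∀ i : Fin m, ψ' (Pi.single i 1) = Pi.single i.castSucc 1 := by
    intro i
    rw [hψ'app, hDφ0, hsnoc0]
  -- Step 2 : differentiate the eikonal identity
  have hfd : ContDiffAt ℝ 1 (fderiv ℝ u) x₀ := hu.fderiv_right (le_refl 2)
  have hfdd : DifferentiableAt ℝ (fderiv ℝ u) x₀ := hfd.differentiableAt one_ne_zero
  set D : (Fin (m+1) → ℝ) →L[ℝ] (Fin (m+1) → ℝ) →L[ℝ] ℝ := fderiv ℝ (fderiv ℝ u) x₀ with hDdef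
  have hDv : ∀ v : Fin (m+1) → ℝ,
      HasFDerivAt (fun y => fderiv ℝ u y v) (D.flip v) x₀ := by
    intro v
    have := hfdd.hasFDerivAt.clm_apply (hasFDerivAt_const v x₀)
    simpa using this
  set G' : (Fin (m+1) → ℝ) →L[ℝ] ℝ :=
    ∑ j : Fin (m+1), ((2:ℝ) * fderiv ℝ u x₀ (Pi.single j 1)) • D.flip (Pi.single j 1) with hG'def
  have hG : HasFDerivAt
      (fun y => ∑ j : Fin (m+1), (fderiv ℝ u y (Pi.single j 1))^2) G' x₀ := by
    rw [hG'def]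
    refine HasFDerivAt.fun_sum ?_
    intro j _
    have h2 : HasFDerivAt (fun y => fderiv ℝ u y (Pi.single j 1) ^ 2)
        ((fderiv ℝ u x₀ (Pi.single j 1)) • D.flip (Pi.single j 1)
          + (fderiv ℝ u x₀ (Pi.single j 1)) • D.flip (Pi.single j 1)) x₀ := by
      simpa [sq] using (hDv (Pi.single j 1)).fun_mul (hDv (Pi.single j 1))
    rw [two_mul, add_smul]
    exact h2
  have hF : HasFDerivAt
      (fun x' => ∑ j : Fin (m+1), (fderiv ℝ u (ψ x') (Pi.single j 1))^2)
      (G'.comp ψ') x₀' := by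
    have hG2 : HasFDerivAt
        (fun y => ∑ j : Fin (m+1), (fderiv ℝ u y (Pi.single j 1))^2) G' (ψ x₀') :=
      hx0 ▸ hG
    exact hG2.comp x₀' hψd
  have hFconst : fderiv ℝ
      (fun x' => ∑ j : Fin (m+1), (fderiv ℝ u (ψ x') (Pi.single j 1))^2) x₀' = 0 := by
    have h : (fun x' => ∑ j : Fin (m+1), (fderiv ℝ u (ψ x') (Pi.single j 1))^2)
        =ᶠ[nhds x₀'] fun _ => κ := hgradsq
    rw [h.fderiv_eq, fderiv_fun_const]
    rfl
  have hGψ0 : G'.comp ψ' = 0 := by rw [← hF.fderiv, hFconst]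
  intro i
  have hkey : G' (Pi.single i.castSucc 1) = 0 := by
    have := congrArg (fun T => T (Pi.single i 1)) hGψ0
    simpa [hψ'single i] using this
  rw [hG'def] at hkey
  simp only [ContinuousLinearMap.sum_apply, ContinuousLinearMap.smul_apply,
    ContinuousLinearMap.flip_apply, smul_eq_mul] at hkey
  rw [Fin.sum_univ_castSucc] at hkey
  simp only [hgrad, mul_zero, zero_mul, Finset.sum_const_zero, zero_add] at hkey
  have hsym : IsSymmSndFDerivAt ℝ u x₀ := hu.isSymmSndFDerivAt (by simp [minSmoothness_of_isRCLikeNormedField])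
  have hDil : D (Pi.single i.castSucc 1) (Pi.single (Fin.last m) 1) = 0 := by
    rcases mul_eq_zero.1 hkey with h | h
    · exact absurd (by linarith : fderiv ℝ u x₀ (Pi.single (Fin.last m) 1) = 0) hlast
    · exact h
  have htarget := (hDv (Pi.single i.castSucc 1)).fderiv
  rw [htarget]
  simp only [ContinuousLinearMap.flip_apply]
  rw [hsym.eq]
  exact hDil
end

section
/- Let n ≥ 2, let φ : ℝ^{n−1} → ℝ be of class C² in a neighborhood of a point x₀' ∈ ℝ^{n−1}, set x₀ = (x₀', φ(x₀')) ∈ ℝⁿ, and let u : ℝⁿ → ℝ be of class C³ in a neighborhood of x₀ with u(x', φ(x')) = 0 and |∇u(x', φ(x'))|² = κ (a constant) for all x' in a neighborhood of x₀'. Assume ∂_i u(x₀) = 0 for every i < n, ∂_n u(x₀) ≠ 0, and that the Hessian ∇²u(x₀) is diagonal. Then for every i < n: ∂_n u(x₀)·∂³_{iin}u(x₀) = ∂²_{nn}u(x₀)·∂²_{ii}u(x₀) − (∂²_{ii}u(x₀))². -/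
/-- (dimension `n = m + 1`, with `m ≥ 1`, so `n ≥ 2`). Let
`φ : ℝ^{n-1} → ℝ` be C² near `x₀'`, `x₀ = (x₀', φ x₀')`, and let `u : ℝⁿ → ℝ` be C³ near
`x₀` with `u (x', φ x') = 0` and `|∇u (x', φ x')|² = κ` (a constant) for `x'` near `x₀'`.
Assume `∂ᵢ u (x₀) = 0` for all `i < n`, `∂ₙ u (x₀) ≠ 0` and the Hessian `∇²u (x₀)` is
diagonal. Then for every `i < n`:
`∂ₙ u (x₀) · ∂³ᵢᵢₙ u (x₀) = ∂²ₙₙ u (x₀) · ∂²ᵢᵢ u (x₀) - (∂²ᵢᵢ u (x₀))²`. -/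
theorem stmt_11 (m : ℕ) (hm : 1 ≤ m)
    (φ : (Fin m → ℝ) → ℝ) (x₀' : Fin m → ℝ)
    (u : (Fin (m + 1) → ℝ) → ℝ) (x₀ : Fin (m + 1) → ℝ) (κ : ℝ)
    (hx₀ : x₀ = Fin.snoc x₀' (φ x₀'))
    (hφ : ContDiffAt ℝ 2 φ x₀')
    (hu : ContDiffAt ℝ 3 u x₀)
    (hzero : ∀ᶠ x' in nhds x₀', u (Fin.snoc x' (φ x')) = 0)
    (hgradsq : ∀ᶠ x' in nhds x₀',
      ∑ j : Fin (m + 1), (fderiv ℝ u (Fin.snoc x' (φ x')) (Pi.single j 1)) ^ 2 = κ)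
    (hgrad : ∀ i : Fin m, fderiv ℝ u x₀ (Pi.single i.castSucc 1) = 0)
    (hlast : fderiv ℝ u x₀ (Pi.single (Fin.last m) 1) ≠ 0)
    (hdiag : ∀ i j : Fin (m + 1), i ≠ j →
      fderiv ℝ (fun y => fderiv ℝ u y (Pi.single i 1)) x₀ (Pi.single j 1) = 0) :
    ∀ i : Fin m,
      fderiv ℝ u x₀ (Pi.single (Fin.last m) 1) *
          fderiv ℝ (fun y =>
              fderiv ℝ (fun z => fderiv ℝ u z (Pi.single (Fin.last m) 1)) y
                (Pi.single i.castSucc 1)) x₀ (Pi.single i.castSucc 1)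
        = fderiv ℝ (fun y => fderiv ℝ u y (Pi.single (Fin.last m) 1)) x₀
              (Pi.single (Fin.last m) 1) *
            fderiv ℝ (fun y => fderiv ℝ u y (Pi.single i.castSucc 1)) x₀
              (Pi.single i.castSucc 1)
          - (fderiv ℝ (fun y => fderiv ℝ u y (Pi.single i.castSucc 1)) x₀
              (Pi.single i.castSucc 1)) ^ 2 := by
  intro i
  -- the linear "append 0" map
  set A : (Fin m → ℝ) →L[ℝ] (Fin (m+1) → ℝ) :=
    ContinuousLinearMap.pi (fun j => Fin.lastCases 0 (fun k => ContinuousLinearMap.proj k) j)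
    with hA_def
  have hsnoc : ∀ (y : Fin m → ℝ) (a : ℝ),
      (Fin.snoc y a : Fin (m+1) → ℝ) = A y + a • (Pi.single (Fin.last m) 1 : Fin (m+1) → ℝ) := by
    intro y a
    funext j
    induction j using Fin.lastCases with
    | last => simp [hA_def]
    | cast k =>
      simp [hA_def, Pi.single_eq_of_ne (Fin.castSucc_lt_last k).ne]
  have hAeI : A (Pi.single i 1) = Pi.single i.castSucc 1 := by
    funext j
    induction j using Fin.lastCases with
    | last => simp [hA_def, Pi.single_eq_of_ne (Fin.castSucc_lt_last i).ne.symm]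
    | cast k =>
      rcases eq_or_ne k i with rfl | hk
      · simp [hA_def]
      · simp [hA_def, Pi.single_eq_of_ne hk,
          Pi.single_eq_of_ne (fun h => hk (Fin.castSucc_injective _ h))]
  -- the curve
  set c : ℝ → (Fin m → ℝ) := fun t => x₀' + t • (Pi.single i 1 : Fin m → ℝ) with hc_def
  have hc0 : c 0 = x₀' := by simp [hc_def]
  have hc : ∀ t, HasDerivAt c (Pi.single i 1) t := by
    intro t
    simpa [hc_def] using ((hasDerivAt_id t).smul_const (Pi.single i 1 : Fin m → ℝ)).const_add x₀'
  have hccd : ContDiff ℝ 2 c := contDiff_const.add (contDiff_id.smul contDiff_const)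
  have hctend : Filter.Tendsto c (nhds 0) (nhds x₀') := by
    rw [← hc0]; exact (hccd.continuous.continuousAt).tendsto
  set ψ : ℝ → ℝ := fun t => φ (c t) with hψ_def
  have hψ : ContDiffAt ℝ 2 ψ 0 := (hc0 ▸ hφ).comp 0 hccd.contDiffAt
  have hψdiff : ∀ᶠ t in nhds 0, DifferentiableAt ℝ ψ t :=
    (hψ.eventually (by simp)).mono fun t ht => ht.differentiableAt two_ne_zero
  have hψ1 : ContDiffAt ℝ 1 (deriv ψ) 0 := by
    have : ContDiffAt ℝ 1 (fun t => fderiv ℝ ψ t 1) 0 :=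
      (hψ.fderiv_right (le_refl 2)).clm_apply contDiffAt_const
    exact this
  set ψ₂ : ℝ := deriv (deriv ψ) 0 with hψ₂_def
  have hψ₂ : HasDerivAt (deriv ψ) ψ₂ 0 := (hψ1.differentiableAt one_ne_zero).hasDerivAt
  set γ : ℝ → (Fin (m+1) → ℝ) :=
    fun t => A (c t) + ψ t • (Pi.single (Fin.last m) 1 : Fin (m+1) → ℝ) with hγ_def
  have hγsnoc : ∀ t, γ t = Fin.snoc (c t) (ψ t) := fun t => (hsnoc (c t) (ψ t)).symm
  have hγ0 : γ 0 = x₀ := by rw [hγsnoc 0, hx₀, hc0]; simp [hψ_def, hc0]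
  have hγ : ∀ᶠ t in nhds 0, HasDerivAt γ
      (A (Pi.single i 1) + deriv ψ t • (Pi.single (Fin.last m) 1 : Fin (m+1) → ℝ)) t := by
    filter_upwards [hψdiff] with t ht
    exact (A.hasFDerivAt.comp_hasDerivAt t (hc t)).add (ht.hasDerivAt.smul_const _)
  have hγtend : Filter.Tendsto γ (nhds 0) (nhds x₀) := by
    rw [← hγ0]
    have h2 : ContinuousAt ψ 0 :=
      (hc0.symm ▸ hφ.continuousAt : ContinuousAt φ (c 0)).comp hccd.continuous.continuousAt
    exact ((A.continuous.continuousAt.comp hccd.continuous.continuousAt).add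
      (h2.smul continuousAt_const)).tendsto
  -- the first derivatives of u as functions
  set v : Fin (m+1) → (Fin (m+1) → ℝ) → ℝ :=
    fun j x => fderiv ℝ u x (Pi.single j 1) with hv_def
  have hv : ∀ j, ContDiffAt ℝ 2 (v j) x₀ :=
    fun j => (hu.fderiv_right (by norm_num)).clm_apply contDiffAt_const
  set w : Fin (m+1) → (Fin (m+1) → ℝ) → ℝ :=
    fun j x => fderiv ℝ (v j) x (Pi.single i.castSucc 1) with hw_def
  set z : Fin (m+1) → (Fin (m+1) → ℝ) → ℝ :=
    fun j x => fderiv ℝ (v j) x (Pi.single (Fin.last m) 1) with hz_def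
  have hw : ∀ j, ContDiffAt ℝ 1 (w j) x₀ :=
    fun j => ((hv j).fderiv_right (le_refl 2)).clm_apply contDiffAt_const
  have hz : ∀ j, ContDiffAt ℝ 1 (z j) x₀ :=
    fun j => ((hv j).fderiv_right (le_refl 2)).clm_apply contDiffAt_const
  -- eventual differentiability along the curve
  have hud : ∀ᶠ t in nhds 0, DifferentiableAt ℝ u (γ t) :=
    hγtend.eventually ((hu.eventually (by simp)).mono fun x hx =>
      hx.differentiableAt (by norm_num))
  have hvd : ∀ᶠ t in nhds 0, ∀ j, DifferentiableAt ℝ (v j) (γ t) := by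
    rw [Filter.eventually_all]
    exact fun j => hγtend.eventually (((hv j).eventually (by simp)).mono fun x hx =>
      hx.differentiableAt two_ne_zero)
  -- STEP 1 : the function u ∘ γ vanishes near 0
  have hf0 : ∀ᶠ t in nhds 0, u (γ t) = 0 := by
    filter_upwards [hctend.eventually hzero] with t ht
    rw [hγsnoc t]; exact ht
  -- its derivative
  have hfd : ∀ᶠ t in nhds 0, HasDerivAt (fun s => u (γ s))
      (v i.castSucc (γ t) + deriv ψ t * v (Fin.last m) (γ t)) t := by
    filter_upwards [hud, hγ] with t ht hγt
    have := ht.hasFDerivAt.comp_hasDerivAt t hγt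
    simpa [hv_def, hAeI, smul_eq_mul, Function.comp_def] using this
  -- so that derivative vanishes near 0
  have hh0 : ∀ᶠ t in nhds 0,
      v i.castSucc (γ t) + deriv ψ t * v (Fin.last m) (γ t) = 0 := by
    filter_upwards [hf0.eventually_nhds, hfd] with t h1 h2
    have h1' : (fun s => u (γ s)) =ᶠ[nhds t] (fun _ => (0:ℝ)) := h1
    have hz' : HasDerivAt (fun _ : ℝ => (0:ℝ))
        (v i.castSucc (γ t) + deriv ψ t * v (Fin.last m) (γ t)) t :=
      h2.congr_of_eventuallyEq h1'.symm
    exact hz'.unique (hasDerivAt_const t 0)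
  -- first derivative of ψ vanishes at 0
  have hψ'0 : deriv ψ 0 = 0 := by
    have h0 := hh0.self_of_nhds
    rw [hγ0] at h0
    simp only [hv_def] at h0
    rw [hgrad i, zero_add] at h0
    exact (mul_eq_zero.1 h0).resolve_right hlast
  have hγ0' : HasDerivAt γ (Pi.single i.castSucc 1 : Fin (m+1) → ℝ) 0 := by
    have := hγ.self_of_nhds
    rwa [hψ'0, zero_smul, add_zero, hAeI] at this
  -- derivatives at 0 of the compositions with γ
  have hvd0 : ∀ j, DifferentiableAt ℝ (v j) x₀ := fun j => (hv j).differentiableAt two_ne_zero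
  have hp : ∀ j, HasDerivAt (fun t => v j (γ t)) (w j x₀) 0 := by
    intro j
    have h := ((hγ0.symm ▸ (hvd0 j) : DifferentiableAt ℝ (v j) (γ 0)).hasFDerivAt).comp_hasDerivAt
      0 hγ0'
    simpa [hw_def, hγ0, Function.comp_def] using h
  have hq : ∀ j, HasDerivAt (fun t => w j (γ t))
      (fderiv ℝ (w j) x₀ (Pi.single i.castSucc 1)) 0 := by
    intro j
    have hd : DifferentiableAt ℝ (w j) x₀ := (hw j).differentiableAt one_ne_zero
    have h := ((hγ0.symm ▸ hd : DifferentiableAt ℝ (w j) (γ 0)).hasFDerivAt).comp_hasDerivAt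
      0 hγ0'
    simpa [hγ0, Function.comp_def] using h
  have hr : ∀ j, HasDerivAt (fun t => z j (γ t))
      (fderiv ℝ (z j) x₀ (Pi.single i.castSucc 1)) 0 := by
    intro j
    have hd : DifferentiableAt ℝ (z j) x₀ := (hz j).differentiableAt one_ne_zero
    have h := ((hγ0.symm ▸ hd : DifferentiableAt ℝ (z j) (γ 0)).hasFDerivAt).comp_hasDerivAt
      0 hγ0'
    simpa [hγ0, Function.comp_def] using h
  -- EQUATION 1
  have heq1 : w i.castSucc x₀ + ψ₂ * v (Fin.last m) x₀ = 0 := by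
    have hD : HasDerivAt (fun t => v i.castSucc (γ t) + deriv ψ t * v (Fin.last m) (γ t))
        (w i.castSucc x₀ + (ψ₂ * v (Fin.last m) (γ 0) + deriv ψ 0 * w (Fin.last m) x₀)) 0 :=
      (hp i.castSucc).add (hψ₂.mul (hp (Fin.last m)))
    rw [hψ'0, zero_mul, add_zero, hγ0] at hD
    have h1' : (fun t => v i.castSucc (γ t) + deriv ψ t * v (Fin.last m) (γ t))
        =ᶠ[nhds 0] (fun _ => (0:ℝ)) := hh0
    exact (hD.congr_of_eventuallyEq h1'.symm).unique (hasDerivAt_const 0 0)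
  -- STEP 2 : the gradient-square identity along the curve
  have hg0 : ∀ᶠ t in nhds 0, ∑ j : Fin (m+1), (v j (γ t))^2 = κ := by
    filter_upwards [hctend.eventually hgradsq] with t ht
    rw [hγsnoc t]
    simp only [hv_def, hψ_def]
    exact ht
  have hgd : ∀ᶠ t in nhds 0, HasDerivAt (fun s => ∑ j : Fin (m+1), (v j (γ s))^2)
      (∑ j : Fin (m+1), 2 * v j (γ t) * (w j (γ t) + deriv ψ t * z j (γ t))) t := by
    filter_upwards [hvd, hγ, hψdiff] with t hvt hγt hψt
    refine HasDerivAt.fun_sum fun j _ => ?_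
    have h1 : HasDerivAt (fun s => v j (γ s)) (w j (γ t) + deriv ψ t * z j (γ t)) t := by
      have h := ((hvt j).hasFDerivAt).comp_hasDerivAt t hγt
      simpa [hw_def, hz_def, hAeI, smul_eq_mul, Function.comp_def] using h
    simpa [Pi.pow_def] using h1.pow 2
  have hG0 : ∀ᶠ t in nhds 0,
      ∑ j : Fin (m+1), 2 * v j (γ t) * (w j (γ t) + deriv ψ t * z j (γ t)) = 0 := by
    filter_upwards [hg0.eventually_nhds, hgd] with t h1 h2
    have h1' : (fun s => ∑ j : Fin (m+1), (v j (γ s))^2) =ᶠ[nhds t] (fun _ => κ) := h1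
    exact (h2.congr_of_eventuallyEq h1'.symm).unique (hasDerivAt_const t κ)
  have hGD : HasDerivAt
      (fun t => ∑ j : Fin (m+1), 2 * v j (γ t) * (w j (γ t) + deriv ψ t * z j (γ t)))
      (∑ j : Fin (m+1), (2 * w j x₀ * (w j (γ 0) + deriv ψ 0 * z j (γ 0)) +
        2 * v j (γ 0) * (fderiv ℝ (w j) x₀ (Pi.single i.castSucc 1) +
          (ψ₂ * z j (γ 0) + deriv ψ 0 * fderiv ℝ (z j) x₀ (Pi.single i.castSucc 1))))) 0 := by
    refine HasDerivAt.fun_sum fun j _ => ?_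
    exact ((hp j).const_mul 2).mul ((hq j).add (hψ₂.mul (hr j)))
  -- EQUATION 2
  have heq2 : ∑ j : Fin (m+1), (2 * w j x₀ * w j x₀ +
      2 * v j x₀ * (fderiv ℝ (w j) x₀ (Pi.single i.castSucc 1) + ψ₂ * z j x₀)) = 0 := by
    have h1' : (fun t => ∑ j : Fin (m+1), 2 * v j (γ t) * (w j (γ t) + deriv ψ t * z j (γ t)))
        =ᶠ[nhds 0] (fun _ => (0:ℝ)) := hG0
    have hfin := (hGD.congr_of_eventuallyEq h1'.symm).unique (hasDerivAt_const 0 0)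
    simp only [hγ0, hψ'0, zero_mul, mul_zero, add_zero] at hfin
    exact hfin
  rw [Finset.sum_add_distrib] at heq2
  have hS1 : ∑ j : Fin (m+1), 2 * w j x₀ * w j x₀
      = 2 * w i.castSucc x₀ * w i.castSucc x₀ := by
    refine Finset.sum_eq_single i.castSucc (fun j _ hj => ?_) (by simp)
    have hj0 : w j x₀ = 0 := by
      simp only [hw_def, hv_def]
      exact hdiag j i.castSucc hj
    rw [hj0, mul_zero]
  have hS2 : ∑ j : Fin (m+1),
        2 * v j x₀ * (fderiv ℝ (w j) x₀ (Pi.single i.castSucc 1) + ψ₂ * z j x₀)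
      = 2 * v (Fin.last m) x₀ * (fderiv ℝ (w (Fin.last m)) x₀ (Pi.single i.castSucc 1) +
          ψ₂ * z (Fin.last m) x₀) := by
    refine Finset.sum_eq_single (Fin.last m) (fun j _ hj => ?_) (by simp)
    obtain ⟨k, rfl⟩ := Fin.exists_castSucc_eq.2 hj
    have hv0 : v k.castSucc x₀ = 0 := by
      simp only [hv_def]; exact hgrad k
    rw [hv0]; ring
  rw [hS1, hS2] at heq2
  simp only [hw_def, hv_def, hz_def] at heq1 heq2
  linear_combination (-(fderiv ℝ (fun y => fderiv ℝ u y (Pi.single (Fin.last m) 1)) x₀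
    (Pi.single (Fin.last m) 1))) * heq1 + (1/2 : ℝ) * heq2
end

section
/- Let n ≥ 1, let u : ℝⁿ → ℝ be of class C³ on a neighborhood of a point x₀, and suppose the minimal surface operator M[u] := div(∇u/√(1+|∇u|²)) vanishes identically on that neighborhood. Assume ∇u(x₀) = c·eₙ for some c ∈ ℝ and that ∇²u(x₀) is diagonal. Then for every i < n: Σ_{j<n} ∂³_{ijj}u(x₀) = −∂³_{inn}u(x₀)/(1 + c²). -/
open Finset

section helpers
variable {E : Type*} [NormedAddCommGroup E] [NormedSpace ℝ E]

lemma fderiv_eval {f : E → ℝ} {x : E} (h : DifferentiableAt ℝ (fderiv ℝ f) x) (v w : E) :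
    fderiv ℝ (fun y => fderiv ℝ f y v) x w = fderiv ℝ (fderiv ℝ f) x w v := by
  have h1 := h.hasFDerivAt.clm_apply (hasFDerivAt_const v x)
  simp only [ContinuousLinearMap.comp_zero, add_zero] at h1
  rw [h1.fderiv]
  simp

lemma sym2 {f : E → ℝ} {x : E} (hf : ContDiffAt ℝ 2 f x) (v w : E) :
    fderiv ℝ (fun y => fderiv ℝ f y v) x w = fderiv ℝ (fun y => fderiv ℝ f y w) x v := by
  have hd : DifferentiableAt ℝ (fderiv ℝ f) x :=
    (hf.fderiv_right (m := 1) (by norm_num)).differentiableAt (by norm_num)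
  rw [fderiv_eval hd, fderiv_eval hd, hf.isSymmSndFDerivAt minSmoothness_of_isRCLikeNormedField.le w v]

lemma contDiffAt_fderiv_eval {f : E → ℝ} {x : E} {m : ℕ} (hf : ContDiffAt ℝ (m+1) f x) (v : E) :
    ContDiffAt ℝ m (fun y => fderiv ℝ f y v) x := by
  have h1 : ContDiffAt ℝ m (fderiv ℝ f) x := hf.fderiv_right (by norm_num)
  exact (ContinuousLinearMap.apply ℝ ℝ v).contDiff.contDiffAt.comp x h1

end helpers

lemma quot_expand {n : ℕ} (u : (Fin n → ℝ) → ℝ) (y : Fin n → ℝ) (hy : ContDiffAt ℝ 3 u y) :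
    ∑ i : Fin n, fderiv ℝ (fun z => fderiv ℝ u z (Pi.single i 1) /
        Real.sqrt (1 + ∑ j : Fin n, (fderiv ℝ u z (Pi.single j 1)) ^ 2)) y (Pi.single i 1)
    = ((1 + ∑ j : Fin n, (fderiv ℝ u y (Pi.single j 1))^2) *
        (∑ j : Fin n, fderiv ℝ (fun z => fderiv ℝ u z (Pi.single j 1)) y (Pi.single j 1))
       - ∑ j : Fin n, ∑ k : Fin n, fderiv ℝ u y (Pi.single j 1) * fderiv ℝ u y (Pi.single k 1) *
          fderiv ℝ (fun z => fderiv ℝ u z (Pi.single k 1)) y (Pi.single j 1))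
      / (Real.sqrt (1 + ∑ j : Fin n, (fderiv ℝ u y (Pi.single j 1))^2))^3 := by
  have hc2 : ∀ j : Fin n, ContDiffAt ℝ 2 (fun z => fderiv ℝ u z (Pi.single j 1)) y := by
    intro j
    exact contDiffAt_fderiv_eval (m := 2) (by exact_mod_cast hy) _
  have hDf : ∀ j : Fin n, HasFDerivAt (fun z => fderiv ℝ u z (Pi.single j 1))
      (fderiv ℝ (fun z => fderiv ℝ u z (Pi.single j 1)) y) y :=
    fun j => ((hc2 j).differentiableAt (by norm_num)).hasFDerivAt
  have hpos : (0:ℝ) < 1 + ∑ j : Fin n, (fderiv ℝ u y (Pi.single j 1))^2 := by positivity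
  set w := Real.sqrt (1 + ∑ j : Fin n, (fderiv ℝ u y (Pi.single j 1))^2) with hwdef
  have hw : 0 < w := Real.sqrt_pos.2 hpos
  have hw2 : w^2 = 1 + ∑ j : Fin n, (fderiv ℝ u y (Pi.single j 1))^2 := Real.sq_sqrt hpos.le
  have hS : HasFDerivAt (fun z => 1 + ∑ j : Fin n, (fderiv ℝ u z (Pi.single j 1)) ^ 2)
      (∑ j : Fin n, (((2:ℕ) * fderiv ℝ u y (Pi.single j 1) ^ (2-1)) •
        fderiv ℝ (fun z => fderiv ℝ u z (Pi.single j 1)) y)) y := by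
    refine (HasFDerivAt.fun_sum (fun j (_ : j ∈ Finset.univ) => ?_)).const_add (1:ℝ)
    exact (hasDerivAt_pow 2 _).comp_hasFDerivAt y (hDf j)
  have hWf : HasFDerivAt (fun z => Real.sqrt (1 + ∑ j : Fin n, (fderiv ℝ u z (Pi.single j 1)) ^ 2))
      ((1 / (2 * w)) • (∑ j : Fin n, (((2:ℕ) * fderiv ℝ u y (Pi.single j 1) ^ (2-1)) •
        fderiv ℝ (fun z => fderiv ℝ u z (Pi.single j 1)) y))) y := hS.sqrt hpos.ne'
  have hinv : HasFDerivAt (fun z => (Real.sqrt (1 + ∑ j : Fin n,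
        (fderiv ℝ u z (Pi.single j 1)) ^ 2))⁻¹)
      ((-(w ^ 2)⁻¹) • ((1 / (2 * w)) • (∑ j : Fin n, (((2:ℕ) * fderiv ℝ u y (Pi.single j 1) ^ (2-1)) •
        fderiv ℝ (fun z => fderiv ℝ u z (Pi.single j 1)) y)))) y :=
    (hasDerivAt_inv hw.ne').comp_hasFDerivAt y hWf
  have hdiv : ∀ i : Fin n, HasFDerivAt (fun z => fderiv ℝ u z (Pi.single i 1) /
        Real.sqrt (1 + ∑ j : Fin n, (fderiv ℝ u z (Pi.single j 1)) ^ 2))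
      (fderiv ℝ u y (Pi.single i 1) • ((-(w ^ 2)⁻¹) • ((1 / (2 * w)) •
          (∑ j : Fin n, (((2:ℕ) * fderiv ℝ u y (Pi.single j 1) ^ (2-1)) •
            fderiv ℝ (fun z => fderiv ℝ u z (Pi.single j 1)) y)))) +
        w⁻¹ • fderiv ℝ (fun z => fderiv ℝ u z (Pi.single i 1)) y) y := by
    intro i
    have hfun : (fun z => fderiv ℝ u z (Pi.single i 1) /
        Real.sqrt (1 + ∑ j : Fin n, (fderiv ℝ u z (Pi.single j 1)) ^ 2)) =
        (fun z => fderiv ℝ u z (Pi.single i 1) *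
          (Real.sqrt (1 + ∑ j : Fin n, (fderiv ℝ u z (Pi.single j 1)) ^ 2))⁻¹) :=
      funext fun z => div_eq_mul_inv _ _
    rw [hfun]
    exact (hDf i).mul hinv
  have key : ∀ i : Fin n, fderiv ℝ (fun z => fderiv ℝ u z (Pi.single i 1) /
        Real.sqrt (1 + ∑ j : Fin n, (fderiv ℝ u z (Pi.single j 1)) ^ 2)) y (Pi.single i 1)
      = fderiv ℝ u y (Pi.single i 1) * ((-(w ^ 2)⁻¹) * ((1 / (2 * w)) *
            (∑ j : Fin n, (2 * fderiv ℝ u y (Pi.single j 1) *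
              fderiv ℝ (fun z => fderiv ℝ u z (Pi.single j 1)) y (Pi.single i 1))))) +
          w⁻¹ * fderiv ℝ (fun z => fderiv ℝ u z (Pi.single i 1)) y (Pi.single i 1) := by
    intro i
    rw [(hdiv i).fderiv]
    simp [ContinuousLinearMap.sum_apply, mul_assoc]
  rw [Finset.sum_congr rfl (fun i _ => key i), eq_div_iff (pow_ne_zero 3 hw.ne'), Finset.sum_mul]
  rw [← hw2, Finset.mul_sum, ← Finset.sum_sub_distrib]
  refine Finset.sum_congr rfl (fun i _ => ?_)
  have hsum : ∑ k : Fin n, fderiv ℝ u y (Pi.single i 1) * fderiv ℝ u y (Pi.single k 1) *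
          fderiv ℝ (fun z => fderiv ℝ u z (Pi.single k 1)) y (Pi.single i 1)
      = fderiv ℝ u y (Pi.single i 1) * (∑ j : Fin n, (2 * fderiv ℝ u y (Pi.single j 1) *
          fderiv ℝ (fun z => fderiv ℝ u z (Pi.single j 1)) y (Pi.single i 1))) / 2 := by
    rw [Finset.mul_sum, Finset.sum_div]
    exact Finset.sum_congr rfl (fun j _ => by ring)
  rw [hsum]
  generalize (∑ j : Fin n, (2 * fderiv ℝ u y (Pi.single j 1) *
      fderiv ℝ (fun z => fderiv ℝ u z (Pi.single j 1)) y (Pi.single i 1))) = X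
  field_simp
  ring

/-- Let `u : ℝⁿ → ℝ` be C³ near `x₀` with the minimal surface operator
`div (∇u / √(1 + |∇u|²))` vanishing identically near `x₀`. Assume `∇u (x₀) = c • eₙ`
(`N` being the index of the last coordinate) and that `∇²u (x₀)` is diagonal. Then for
every `i < n`: `∑_{j < n} ∂³ᵢⱼⱼ u (x₀) = - ∂³ᵢₙₙ u (x₀) / (1 + c²)`. -/
theorem stmt_12 (n : ℕ) (hn : 1 ≤ n) (u : (Fin n → ℝ) → ℝ) (x₀ : Fin n → ℝ) (c : ℝ)
    (hu : ContDiffAt ℝ 3 u x₀)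
    (N : Fin n) (hN : (N : ℕ) = n - 1)
    (hMS : ∀ᶠ y in nhds x₀, ∑ i : Fin n,
        fderiv ℝ (fun z => fderiv ℝ u z (Pi.single i 1) /
          Real.sqrt (1 + ∑ j : Fin n, (fderiv ℝ u z (Pi.single j 1)) ^ 2))
          y (Pi.single i 1) = 0)
    (hgrad : ∀ i : Fin n, fderiv ℝ u x₀ (Pi.single i 1) = if i = N then c else 0)
    (hdiag : ∀ i j : Fin n, i ≠ j →
      fderiv ℝ (fun y => fderiv ℝ u y (Pi.single i 1)) x₀ (Pi.single j 1) = 0) :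
    ∀ i : Fin n, i ≠ N →
      ∑ j ∈ Finset.univ.filter (fun j : Fin n => j ≠ N),
          fderiv ℝ (fun y =>
              fderiv ℝ (fun z => fderiv ℝ u z (Pi.single i 1)) y (Pi.single j 1)) x₀
            (Pi.single j 1)
        = - fderiv ℝ (fun y =>
              fderiv ℝ (fun z => fderiv ℝ u z (Pi.single i 1)) y (Pi.single N 1)) x₀
            (Pi.single N 1) / (1 + c ^ 2) := by
  intro i hi
  have h3 : ∀ᶠ y in nhds x₀, ContDiffAt ℝ 3 u y := hu.eventually (by simp)
  have Hzero : ∀ᶠ y in nhds x₀,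
      (1 + ∑ j : Fin n, (fderiv ℝ u y (Pi.single j 1))^2) *
        (∑ j : Fin n, fderiv ℝ (fun z => fderiv ℝ u z (Pi.single j 1)) y (Pi.single j 1))
       - (∑ j : Fin n, ∑ k : Fin n, fderiv ℝ u y (Pi.single j 1) * fderiv ℝ u y (Pi.single k 1) *
          fderiv ℝ (fun z => fderiv ℝ u z (Pi.single k 1)) y (Pi.single j 1)) = 0 := by
    filter_upwards [h3, hMS] with y hy hms
    have hq := quot_expand u y hy
    rw [hms] at hq
    rw [eq_comm, div_eq_zero_iff] at hq
    rcases hq with h | h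
    · exact h
    · exact absurd h (pow_ne_zero 3 (Real.sqrt_pos.2 (by positivity)).ne')
  -- differentiability data at x₀
  have hc2 : ∀ j : Fin n, ContDiffAt ℝ 2 (fun z => fderiv ℝ u z (Pi.single j 1)) x₀ :=
    fun j => contDiffAt_fderiv_eval (m := 2) (by exact_mod_cast hu) _
  have hDf : ∀ j : Fin n, HasFDerivAt (fun z => fderiv ℝ u z (Pi.single j 1))
      (fderiv ℝ (fun z => fderiv ℝ u z (Pi.single j 1)) x₀) x₀ :=
    fun j => ((hc2 j).differentiableAt (by norm_num)).hasFDerivAt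
  have hc1 : ∀ j k : Fin n, ContDiffAt ℝ 1
      (fun y => fderiv ℝ (fun z => fderiv ℝ u z (Pi.single j 1)) y (Pi.single k 1)) x₀ :=
    fun j k => contDiffAt_fderiv_eval (m := 1) (by exact_mod_cast hc2 j) _
  have hD2f : ∀ j k : Fin n, HasFDerivAt
      (fun y => fderiv ℝ (fun z => fderiv ℝ u z (Pi.single j 1)) y (Pi.single k 1))
      (fderiv ℝ (fun y => fderiv ℝ (fun z => fderiv ℝ u z (Pi.single j 1)) y (Pi.single k 1)) x₀)
      x₀ :=
    fun j k => ((hc1 j k).differentiableAt (by norm_num)).hasFDerivAt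
  have hS0 : HasFDerivAt (fun y => 1 + ∑ j : Fin n, (fderiv ℝ u y (Pi.single j 1)) ^ 2)
      (∑ j : Fin n, (((2:ℕ) * fderiv ℝ u x₀ (Pi.single j 1) ^ (2-1)) •
        fderiv ℝ (fun z => fderiv ℝ u z (Pi.single j 1)) x₀)) x₀ := by
    refine (HasFDerivAt.fun_sum (fun j (_ : j ∈ Finset.univ) => ?_)).const_add (1:ℝ)
    exact (hasDerivAt_pow 2 _).comp_hasFDerivAt x₀ (hDf j)
  have hT : HasFDerivAt (fun y => ∑ j : Fin n,
      fderiv ℝ (fun z => fderiv ℝ u z (Pi.single j 1)) y (Pi.single j 1))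
      (∑ j : Fin n, fderiv ℝ (fun y =>
        fderiv ℝ (fun z => fderiv ℝ u z (Pi.single j 1)) y (Pi.single j 1)) x₀) x₀ :=
    HasFDerivAt.fun_sum (fun j _ => hD2f j j)
  have hQ : HasFDerivAt (fun y => ∑ j : Fin n, ∑ k : Fin n,
        fderiv ℝ u y (Pi.single j 1) * fderiv ℝ u y (Pi.single k 1) *
          fderiv ℝ (fun z => fderiv ℝ u z (Pi.single k 1)) y (Pi.single j 1))
      (∑ j : Fin n, ∑ k : Fin n,
        ((fderiv ℝ u x₀ (Pi.single j 1) * fderiv ℝ u x₀ (Pi.single k 1)) •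
            fderiv ℝ (fun y =>
              fderiv ℝ (fun z => fderiv ℝ u z (Pi.single k 1)) y (Pi.single j 1)) x₀ +
          (fderiv ℝ (fun z => fderiv ℝ u z (Pi.single k 1)) x₀ (Pi.single j 1)) •
            (fderiv ℝ u x₀ (Pi.single j 1) • fderiv ℝ (fun z => fderiv ℝ u z (Pi.single k 1)) x₀ +
             fderiv ℝ u x₀ (Pi.single k 1) •
               fderiv ℝ (fun z => fderiv ℝ u z (Pi.single j 1)) x₀))) x₀ :=
    HasFDerivAt.fun_sum (fun j _ => HasFDerivAt.fun_sum (fun k _ =>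
      ((hDf j).fun_mul (hDf k)).fun_mul (hD2f k j)))
  have hG := (hS0.fun_mul hT).fun_sub hQ
  have hfd : fderiv ℝ (fun y =>
      (1 + ∑ j : Fin n, (fderiv ℝ u y (Pi.single j 1))^2) *
        (∑ j : Fin n, fderiv ℝ (fun z => fderiv ℝ u z (Pi.single j 1)) y (Pi.single j 1))
       - (∑ j : Fin n, ∑ k : Fin n, fderiv ℝ u y (Pi.single j 1) * fderiv ℝ u y (Pi.single k 1) *
          fderiv ℝ (fun z => fderiv ℝ u z (Pi.single k 1)) y (Pi.single j 1))) x₀ = 0 := by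
    have heq : (fun y =>
      (1 + ∑ j : Fin n, (fderiv ℝ u y (Pi.single j 1))^2) *
        (∑ j : Fin n, fderiv ℝ (fun z => fderiv ℝ u z (Pi.single j 1)) y (Pi.single j 1))
       - (∑ j : Fin n, ∑ k : Fin n, fderiv ℝ u y (Pi.single j 1) * fderiv ℝ u y (Pi.single k 1) *
          fderiv ℝ (fun z => fderiv ℝ u z (Pi.single k 1)) y (Pi.single j 1)))
        =ᶠ[nhds x₀] (fun _ => (0:ℝ)) := Hzero
    rw [heq.fderiv_eq]
    exact fderiv_const_apply 0
  have hGval := hG.fderiv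
  rw [hfd] at hGval
  have key0 := congrArg (fun L : (Fin n → ℝ) →L[ℝ] ℝ => L (Pi.single i 1)) hGval.symm
  simp only [ContinuousLinearMap.zero_apply, ContinuousLinearMap.add_apply,
    ContinuousLinearMap.sub_apply, ContinuousLinearMap.smul_apply,
    ContinuousLinearMap.coe_sum', Finset.sum_apply, smul_eq_mul, pow_one, Nat.cast_ofNat] at key0
  -- values at x₀
  have hD1N : fderiv ℝ u x₀ (Pi.single N 1) = c := by simp [hgrad]
  have hD1 : ∀ j : Fin n, j ≠ N → fderiv ℝ u x₀ (Pi.single j 1) = 0 :=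
    fun j hj => by simp [hgrad, hj]
  have hSval : (∑ j : Fin n, (fderiv ℝ u x₀) (Pi.single j 1) ^ 2) = c ^ 2 := by
    rw [Finset.sum_eq_single N (fun b _ hb => by rw [hD1 b hb]; ring)
      (fun h => absurd (Finset.mem_univ N) h), hD1N]
  have hSder : (∑ x : Fin n, 2 * (fderiv ℝ u x₀) (Pi.single x 1) ^ (2-1) *
      (fderiv ℝ (fun z => (fderiv ℝ u z) (Pi.single x 1)) x₀) (Pi.single i 1)) = 0 := by
    refine Finset.sum_eq_zero (fun j _ => ?_)
    by_cases hj : j = i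
    · rw [hD1 j (by rw [hj]; exact hi)]; ring
    · rw [hdiag j i hj]; ring
  have hQval : (∑ x : Fin n, ∑ x_1 : Fin n,
        ((fderiv ℝ u x₀) (Pi.single x 1) * (fderiv ℝ u x₀) (Pi.single x_1 1) *
            (fderiv ℝ (fun y => (fderiv ℝ (fun z => (fderiv ℝ u z) (Pi.single x_1 1)) y)
              (Pi.single x 1)) x₀) (Pi.single i 1) +
          (fderiv ℝ (fun z => (fderiv ℝ u z) (Pi.single x_1 1)) x₀) (Pi.single x 1) *
            ((fderiv ℝ u x₀) (Pi.single x 1) *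
                (fderiv ℝ (fun z => (fderiv ℝ u z) (Pi.single x_1 1)) x₀) (Pi.single i 1) +
              (fderiv ℝ u x₀) (Pi.single x_1 1) *
                (fderiv ℝ (fun z => (fderiv ℝ u z) (Pi.single x 1)) x₀) (Pi.single i 1))))
      = c ^ 2 * (fderiv ℝ (fun y => (fderiv ℝ (fun z => (fderiv ℝ u z) (Pi.single N 1)) y)
          (Pi.single N 1)) x₀) (Pi.single i 1) := by
    rw [Finset.sum_eq_single N ?_ (fun h => absurd (Finset.mem_univ N) h)]
    · rw [Finset.sum_eq_single N ?_ (fun h => absurd (Finset.mem_univ N) h)]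
      · rw [hD1N, hdiag N i (Ne.symm hi)]; ring
      · intro k _ hk
        rw [hD1 k hk, hdiag k N hk]; ring
    · intro j _ hj
      refine Finset.sum_eq_zero (fun k _ => ?_)
      rw [hD1 j hj]
      by_cases hk : k = N
      · rw [hk, hdiag N j (Ne.symm hj)]; ring
      · rw [hD1 k hk]; ring
  rw [hSval, hSder, hQval] at key0
  -- symmetry of third derivatives
  have hsym : ∀ j : Fin n,
      (fderiv ℝ (fun y => (fderiv ℝ (fun z => (fderiv ℝ u z) (Pi.single j 1)) y)
        (Pi.single j 1)) x₀) (Pi.single i 1)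
      = (fderiv ℝ (fun y => (fderiv ℝ (fun z => (fderiv ℝ u z) (Pi.single i 1)) y)
        (Pi.single j 1)) x₀) (Pi.single j 1) := by
    intro j
    rw [sym2 (hc2 j) (Pi.single j 1) (Pi.single i 1)]
    have hev : (fun y => fderiv ℝ (fun z => fderiv ℝ u z (Pi.single j 1)) y (Pi.single i 1))
        =ᶠ[nhds x₀]
        (fun y => fderiv ℝ (fun z => fderiv ℝ u z (Pi.single i 1)) y (Pi.single j 1)) := by
      filter_upwards [h3] with y hy
      exact sym2 (hy.of_le (by norm_num)) (Pi.single j 1) (Pi.single i 1)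
    rw [hev.fderiv_eq]
  simp only [hsym] at key0
  -- final algebra
  have hall : (∑ j ∈ Finset.univ.filter (fun j : Fin n => j ≠ N),
        (fderiv ℝ (fun y => (fderiv ℝ (fun z => (fderiv ℝ u z) (Pi.single i 1)) y)
          (Pi.single j 1)) x₀) (Pi.single j 1)) +
      (fderiv ℝ (fun y => (fderiv ℝ (fun z => (fderiv ℝ u z) (Pi.single i 1)) y)
          (Pi.single N 1)) x₀) (Pi.single N 1)
      = ∑ j : Fin n, (fderiv ℝ (fun y => (fderiv ℝ (fun z => (fderiv ℝ u z) (Pi.single i 1)) y)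
          (Pi.single j 1)) x₀) (Pi.single j 1) := by
    rw [Finset.filter_ne']
    exact Finset.sum_erase_add _ _ (Finset.mem_univ N)
  have h1c : (1:ℝ) + c ^ 2 ≠ 0 := by positivity
  rw [eq_div_iff h1c]
  linear_combination hall * (1 + c ^ 2) + key0
end

section
/- Let n ≥ 1, let u : ℝⁿ → ℝ be of class C³ on a neighborhood of a point x₀, and suppose the minimal surface operator M[u] := div(∇u/√(1+|∇u|²)) vanishes identically on that neighborhood. Assume ∇u(x₀) = c·eₙ with c ≠ 0, that ∇²u(x₀) is diagonal, and that for every j < n the relation c·∂³_{jjn}u(x₀) = ∂²_{nn}u(x₀)·∂²_{jj}u(x₀) − (∂²_{jj}u(x₀))² holds. Then ∂³_{nnn}u(x₀) = ((1+c²)/c)·Σ_{j<n} (∂²_{jj}u(x₀))² + ((1+3c²)/(c(1+c²)))·(∂²_{nn}u(x₀))². -/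
open Finset

lemma algAux (W A B vi S : ℝ) (hW : W ≠ 0) (hS : W * W = S) :
    W ^ 3 * (vi * (-(W ^ 2)⁻¹ * ((1 / (2 * W)) * (2 * B))) + W⁻¹ * A) = S * A - vi * B := by
  subst hS; field_simp; ring

lemma aux1 {n : ℕ} {v : Fin n → (Fin n → ℝ) → ℝ} {y : Fin n → ℝ}
    (hv : ∀ i, DifferentiableAt ℝ (v i) y)
    (h0 : ∑ i : Fin n, fderiv ℝ (fun z => v i z /
        Real.sqrt (1 + ∑ j : Fin n, (v j z) ^ 2)) y (Pi.single i 1) = 0) :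
    (1 + ∑ j : Fin n, v j y * v j y) * ∑ i : Fin n, fderiv ℝ (v i) y (Pi.single i 1)
      = ∑ i : Fin n, v i y * ∑ j : Fin n, v j y * fderiv ℝ (v j) y (Pi.single i 1) := by
  classical
  set S : (Fin n → ℝ) → ℝ := fun z => 1 + ∑ j : Fin n, (v j z) ^ 2 with hSdef
  set DS : (Fin n → ℝ) →L[ℝ] ℝ := ∑ j : Fin n, (2 * v j y) • fderiv ℝ (v j) y with hDSdef
  have hS : HasFDerivAt S DS y := by
    have : HasFDerivAt (fun z => ∑ j : Fin n, (v j z) ^ 2) DS y := by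
      rw [hDSdef]
      apply HasFDerivAt.fun_sum
      intro j _
      have h1 : HasFDerivAt (fun z => v j z * v j z)
          (v j y • fderiv ℝ (v j) y + v j y • fderiv ℝ (v j) y) y :=
        (hv j).hasFDerivAt.mul (hv j).hasFDerivAt
      have h2 : (fun z => (v j z) ^ 2) = fun z => v j z * v j z := by
        funext z; ring
      rw [h2, two_mul, add_smul]
      exact h1
    exact this.const_add 1
  have hSpos : 0 < S y := by
    have : (0:ℝ) ≤ ∑ j : Fin n, (v j y) ^ 2 := Finset.sum_nonneg fun j _ => sq_nonneg _
    simp only [hSdef]; positivity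
  have hWpos : 0 < Real.sqrt (S y) := Real.sqrt_pos.2 hSpos
  have hWne : Real.sqrt (S y) ≠ 0 := hWpos.ne'
  have hW2 : Real.sqrt (S y) * Real.sqrt (S y) = S y := Real.mul_self_sqrt hSpos.le
  have hW : HasFDerivAt (fun z => Real.sqrt (S z)) ((1 / (2 * Real.sqrt (S y))) • DS) y :=
    hS.sqrt hSpos.ne'
  have hinv : HasFDerivAt (fun z => (Real.sqrt (S z))⁻¹)
      ((-((Real.sqrt (S y)) ^ 2)⁻¹) • ((1 / (2 * Real.sqrt (S y))) • DS)) y :=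
    (hasDerivAt_inv hWne).comp_hasFDerivAt y hW
  have hq : ∀ i : Fin n, fderiv ℝ (fun z => v i z /
        Real.sqrt (1 + ∑ j : Fin n, (v j z) ^ 2)) y (Pi.single i 1)
      = v i y * ((-((Real.sqrt (S y)) ^ 2)⁻¹) * ((1 / (2 * Real.sqrt (S y))) * (DS (Pi.single i 1))))
        + (Real.sqrt (S y))⁻¹ * fderiv ℝ (v i) y (Pi.single i 1) := by
    intro i
    have hfun : (fun z => v i z / Real.sqrt (1 + ∑ j : Fin n, (v j z) ^ 2))
        = fun z => v i z * (Real.sqrt (S z))⁻¹ := by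
      funext z; rw [div_eq_mul_inv, hSdef]
    have hmul : HasFDerivAt (fun z => v i z * (Real.sqrt (S z))⁻¹)
        (v i y • ((-((Real.sqrt (S y)) ^ 2)⁻¹) • ((1 / (2 * Real.sqrt (S y))) • DS))
          + (Real.sqrt (S y))⁻¹ • fderiv ℝ (v i) y) y := (hv i).hasFDerivAt.mul hinv
    rw [hfun, hmul.fderiv]
    simp [mul_assoc]
  rw [Finset.sum_congr rfl (fun i _ => hq i)] at h0
  -- multiply h0 by W^3
  have key : ∀ i : Fin n,
      (Real.sqrt (S y))^3 * (v i y * ((-((Real.sqrt (S y)) ^ 2)⁻¹) *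
          ((1 / (2 * Real.sqrt (S y))) * (DS (Pi.single i 1))))
        + (Real.sqrt (S y))⁻¹ * fderiv ℝ (v i) y (Pi.single i 1))
      = S y * fderiv ℝ (v i) y (Pi.single i 1)
        - v i y * ∑ j : Fin n, v j y * fderiv ℝ (v j) y (Pi.single i 1) := by
    intro i
    have hDSi : DS (Pi.single i 1) = ∑ j : Fin n, 2 * v j y * fderiv ℝ (v j) y (Pi.single i 1) := by
      rw [hDSdef]
      simp [ContinuousLinearMap.sum_apply, mul_assoc]
    rw [hDSi]
    have h2 : ∑ j : Fin n, 2 * v j y * fderiv ℝ (v j) y (Pi.single i 1)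
        = 2 * ∑ j : Fin n, v j y * fderiv ℝ (v j) y (Pi.single i 1) := by
      rw [Finset.mul_sum]; exact Finset.sum_congr rfl fun j _ => by ring
    rw [h2]
    exact algAux _ _ _ _ _ hWne hW2
  have h1 : ∑ i : Fin n, (S y * fderiv ℝ (v i) y (Pi.single i 1)
      - v i y * ∑ j : Fin n, v j y * fderiv ℝ (v j) y (Pi.single i 1)) = 0 := by
    rw [← Finset.sum_congr rfl (fun i _ => key i), ← Finset.mul_sum, h0, mul_zero]
  rw [Finset.sum_sub_distrib, ← Finset.mul_sum] at h1
  have hSy' : S y = 1 + ∑ j : Fin n, v j y * v j y := by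
    show 1 + ∑ j : Fin n, (v j y) ^ 2 = _
    congr 1
    exact Finset.sum_congr rfl fun j _ => by ring
  rw [hSy'] at h1
  linarith


lemma aux2 {n : ℕ} {v : Fin n → (Fin n → ℝ) → ℝ} {w : Fin n → Fin n → (Fin n → ℝ) → ℝ}
    {x₀ d : Fin n → ℝ}
    (hv : ∀ i, DifferentiableAt ℝ (v i) x₀) (hw : ∀ i j, DifferentiableAt ℝ (w i j) x₀) :
    fderiv ℝ (fun y => (1 + ∑ j : Fin n, v j y * v j y) * (∑ i : Fin n, w i i y)
        - ∑ i : Fin n, v i y * ∑ j : Fin n, v j y * w j i y) x₀ d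
      = (∑ j : Fin n, (v j x₀ * fderiv ℝ (v j) x₀ d + v j x₀ * fderiv ℝ (v j) x₀ d))
            * (∑ i : Fin n, w i i x₀)
        + (1 + ∑ j : Fin n, v j x₀ * v j x₀) * (∑ i : Fin n, fderiv ℝ (w i i) x₀ d)
        - ∑ i : Fin n, (v i x₀ *
              (∑ j : Fin n, (v j x₀ * fderiv ℝ (w j i) x₀ d + w j i x₀ * fderiv ℝ (v j) x₀ d))
            + (∑ j : Fin n, v j x₀ * w j i x₀) * fderiv ℝ (v i) x₀ d) := by
  classical
  have hA : HasFDerivAt (fun y => 1 + ∑ j : Fin n, v j y * v j y)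
      (∑ j : Fin n, (v j x₀ • fderiv ℝ (v j) x₀ + v j x₀ • fderiv ℝ (v j) x₀)) x₀ := by
    have := HasFDerivAt.sum (u := Finset.univ)
      (A := fun j : Fin n => fun y => v j y * v j y)
      (A' := fun j : Fin n => v j x₀ • fderiv ℝ (v j) x₀ + v j x₀ • fderiv ℝ (v j) x₀)
      (fun j _ => (hv j).hasFDerivAt.mul (hv j).hasFDerivAt)
    simpa using this.const_add 1
  have hB : HasFDerivAt (fun y => ∑ i : Fin n, w i i y)
      (∑ i : Fin n, fderiv ℝ (w i i) x₀) x₀ :=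
    HasFDerivAt.fun_sum (fun i _ => (hw i i).hasFDerivAt)
  have hC : HasFDerivAt (fun y => ∑ i : Fin n, v i y * ∑ j : Fin n, v j y * w j i y)
      (∑ i : Fin n, (v i x₀ • (∑ j : Fin n, (v j x₀ • fderiv ℝ (w j i) x₀
            + w j i x₀ • fderiv ℝ (v j) x₀))
          + (∑ j : Fin n, v j x₀ * w j i x₀) • fderiv ℝ (v i) x₀)) x₀ := by
    apply HasFDerivAt.fun_sum
    intro i _
    have hg : HasFDerivAt (fun y => ∑ j : Fin n, v j y * w j i y)
        (∑ j : Fin n, (v j x₀ • fderiv ℝ (w j i) x₀ + w j i x₀ • fderiv ℝ (v j) x₀)) x₀ :=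
      HasFDerivAt.fun_sum (fun j _ => (hv j).hasFDerivAt.mul (hw j i).hasFDerivAt)
    exact (hv i).hasFDerivAt.mul hg
  have htot := ((hA.fun_mul hB).fun_sub hC).fderiv
  rw [htot]
  simp [ContinuousLinearMap.sum_apply, Finset.mul_sum, Finset.sum_add_distrib,
    mul_add, add_mul, mul_comm, mul_left_comm]
  ring


lemma fdInnerApply {E : Type*} [NormedAddCommGroup E] [NormedSpace ℝ E]
    {f : E → ℝ} {x : E} (hf : DifferentiableAt ℝ (fderiv ℝ f) x) (a b : E) :
    fderiv ℝ (fun y => fderiv ℝ f y a) x b = fderiv ℝ (fderiv ℝ f) x b a := by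
  rw [fderiv_clm_apply hf (differentiableAt_const a)]
  simp

lemma aux3 {E : Type*} [NormedAddCommGroup E] [NormedSpace ℝ E]
    {u : E → ℝ} {x₀ : E} (hu : ContDiffAt ℝ 3 u x₀) (a b : E) :
    fderiv ℝ (fun y => fderiv ℝ (fun z => fderiv ℝ u z a) y a) x₀ b
      = fderiv ℝ (fun y => fderiv ℝ (fun z => fderiv ℝ u z b) y a) x₀ a := by
  set g : E → ℝ := fun z => fderiv ℝ u z a with hgdef
  have hg2 : ContDiffAt ℝ 2 g x₀ :=
    (hu.fderiv_right (m := 2) (by norm_num)).clm_apply contDiffAt_const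
  have hdg : DifferentiableAt ℝ (fderiv ℝ g) x₀ :=
    (hg2.fderiv_right (m := 1) (by norm_num)).differentiableAt (by norm_num)
  have step1 : fderiv ℝ (fun y => fderiv ℝ g y a) x₀ b
      = fderiv ℝ (fun y => fderiv ℝ g y b) x₀ a := by
    rw [fdInnerApply hdg, fdInnerApply hdg]
    exact (hg2.isSymmSndFDerivAt (by norm_num)) b a
  have hswap : (fun y => fderiv ℝ g y b)
      =ᶠ[nhds x₀] (fun y => fderiv ℝ (fun z => fderiv ℝ u z b) y a) := by
    filter_upwards [hu.eventually (by norm_num)] with y hy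
    have hdu : DifferentiableAt ℝ (fderiv ℝ u) y :=
      (hy.fderiv_right (m := 2) (by norm_num)).differentiableAt (by norm_num)
    have e1 : fderiv ℝ g y b = fderiv ℝ (fderiv ℝ u) y b a := fdInnerApply hdu a b
    have e2 : fderiv ℝ (fun z => fderiv ℝ u z b) y a = fderiv ℝ (fderiv ℝ u) y a b :=
      fdInnerApply hdu b a
    rw [e1, e2]
    exact (hy.isSymmSndFDerivAt (by norm_num)) b a
  rw [step1, Filter.EventuallyEq.fderiv_eq hswap]

/-- Let `u : ℝⁿ → ℝ` be C³ near `x₀` with the minimal surface operator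
`div (∇u / √(1 + |∇u|²))` vanishing identically near `x₀`. Assume `∇u (x₀) = c • eₙ`
with `c ≠ 0` (`N` being the index of the last coordinate), that `∇²u (x₀)` is diagonal,
and that for every `j < n`:
`c · ∂³ⱼⱼₙ u (x₀) = ∂²ₙₙ u (x₀) · ∂²ⱼⱼ u (x₀) - (∂²ⱼⱼ u (x₀))²`. Then
`∂³ₙₙₙ u (x₀) = ((1+c²)/c) ∑_{j<n} (∂²ⱼⱼ u (x₀))² + ((1+3c²)/(c(1+c²))) (∂²ₙₙ u (x₀))²`. -/
theorem stmt_13 (n : ℕ) (hn : 1 ≤ n) (u : (Fin n → ℝ) → ℝ) (x₀ : Fin n → ℝ) (c : ℝ)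
    (hc : c ≠ 0)
    (hu : ContDiffAt ℝ 3 u x₀)
    (N : Fin n) (hN : (N : ℕ) = n - 1)
    (hMS : ∀ᶠ y in nhds x₀, ∑ i : Fin n,
        fderiv ℝ (fun z => fderiv ℝ u z (Pi.single i 1) /
          Real.sqrt (1 + ∑ j : Fin n, (fderiv ℝ u z (Pi.single j 1)) ^ 2))
          y (Pi.single i 1) = 0)
    (hgrad : ∀ i : Fin n, fderiv ℝ u x₀ (Pi.single i 1) = if i = N then c else 0)
    (hdiag : ∀ i j : Fin n, i ≠ j →
      fderiv ℝ (fun y => fderiv ℝ u y (Pi.single i 1)) x₀ (Pi.single j 1) = 0)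
    (hthird : ∀ j : Fin n, j ≠ N →
      c * fderiv ℝ (fun y =>
            fderiv ℝ (fun z => fderiv ℝ u z (Pi.single N 1)) y (Pi.single j 1)) x₀
          (Pi.single j 1)
        = fderiv ℝ (fun y => fderiv ℝ u y (Pi.single N 1)) x₀ (Pi.single N 1) *
            fderiv ℝ (fun y => fderiv ℝ u y (Pi.single j 1)) x₀ (Pi.single j 1)
          - (fderiv ℝ (fun y => fderiv ℝ u y (Pi.single j 1)) x₀ (Pi.single j 1)) ^ 2) :
    fderiv ℝ (fun y =>
        fderiv ℝ (fun z => fderiv ℝ u z (Pi.single N 1)) y (Pi.single N 1)) x₀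
      (Pi.single N 1)
      = ((1 + c ^ 2) / c) *
          ∑ j ∈ Finset.univ.filter (fun j : Fin n => j ≠ N),
            (fderiv ℝ (fun y => fderiv ℝ u y (Pi.single j 1)) x₀ (Pi.single j 1)) ^ 2
        + ((1 + 3 * c ^ 2) / (c * (1 + c ^ 2))) *
            (fderiv ℝ (fun y => fderiv ℝ u y (Pi.single N 1)) x₀ (Pi.single N 1)) ^ 2 := by
  classical
  have hC3 : ∀ᶠ y in nhds x₀, ContDiffAt ℝ 3 u y := hu.eventually (by norm_num)
  have hvdiff : ∀ y : Fin n → ℝ, ContDiffAt ℝ 3 u y → ∀ i : Fin n,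
      DifferentiableAt ℝ (fun z => fderiv ℝ u z (Pi.single i 1)) y := fun y hy i =>
    ((hy.fderiv_right (m := 2) (by norm_num)).clm_apply contDiffAt_const).differentiableAt
      (by norm_num)
  have hwdiff : ∀ y : Fin n → ℝ, ContDiffAt ℝ 3 u y → ∀ i j : Fin n,
      DifferentiableAt ℝ
        (fun t => fderiv ℝ (fun z => fderiv ℝ u z (Pi.single i 1)) t (Pi.single j 1)) y := by
    intro y hy i j
    have h2 : ContDiffAt ℝ 2 (fun z => fderiv ℝ u z (Pi.single i 1)) y :=
      (hy.fderiv_right (m := 2) (by norm_num)).clm_apply contDiffAt_const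
    exact ((h2.fderiv_right (m := 1) (by norm_num)).clm_apply contDiffAt_const).differentiableAt
      (by norm_num)
  -- the eventual polynomial form of the PDE
  have hP : (fun y => (1 + ∑ j : Fin n, fderiv ℝ u y (Pi.single j 1) *
          fderiv ℝ u y (Pi.single j 1))
        * (∑ i : Fin n, fderiv ℝ (fun z => fderiv ℝ u z (Pi.single i 1)) y (Pi.single i 1))
      - ∑ i : Fin n, fderiv ℝ u y (Pi.single i 1) * ∑ j : Fin n,
          fderiv ℝ u y (Pi.single j 1) *
            fderiv ℝ (fun z => fderiv ℝ u z (Pi.single j 1)) y (Pi.single i 1))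
      =ᶠ[nhds x₀] (fun _ => (0:ℝ)) := by
    filter_upwards [hC3, hMS] with y hy hMSy
    have h := aux1 (v := fun i z => fderiv ℝ u z (Pi.single i 1)) (y := y)
      (fun i => hvdiff y hy i) hMSy
    simpa using sub_eq_zero_of_eq h
  have hE1 := hP.eq_of_nhds
  have hDP : fderiv ℝ (fun y => (1 + ∑ j : Fin n, fderiv ℝ u y (Pi.single j 1) *
          fderiv ℝ u y (Pi.single j 1))
        * (∑ i : Fin n, fderiv ℝ (fun z => fderiv ℝ u z (Pi.single i 1)) y (Pi.single i 1))
      - ∑ i : Fin n, fderiv ℝ u y (Pi.single i 1) * ∑ j : Fin n,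
          fderiv ℝ u y (Pi.single j 1) *
            fderiv ℝ (fun z => fderiv ℝ u z (Pi.single j 1)) y (Pi.single i 1)) x₀ = 0 := by
    rw [hP.fderiv_eq]
    exact fderiv_const_apply 0
  have hE2 := (aux2 (v := fun i z => fderiv ℝ u z (Pi.single i 1))
      (w := fun i j t => fderiv ℝ (fun z => fderiv ℝ u z (Pi.single i 1)) t (Pi.single j 1))
      (x₀ := x₀) (d := Pi.single N 1)
      (fun i => hvdiff x₀ hu i) (fun i j => hwdiff x₀ hu i j)).symm.trans
    (by rw [hDP])
  beta_reduce at hE2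
  obtain ⟨A, hA⟩ : ∃ A : Fin n → ℝ, ∀ i : Fin n,
      fderiv ℝ (fun z => fderiv ℝ u z (Pi.single i 1)) x₀ (Pi.single i 1) = A i :=
    ⟨_, fun i => rfl⟩
  obtain ⟨T, hT⟩ : ∃ T : Fin n → Fin n → ℝ, ∀ a b : Fin n,
      fderiv ℝ (fun t => fderiv ℝ (fun z => fderiv ℝ u z (Pi.single a 1)) t (Pi.single b 1))
        x₀ (Pi.single N 1) = T a b := ⟨_, fun a b => rfl⟩
  have hW : ∀ a b : Fin n,
      fderiv ℝ (fun z => fderiv ℝ u z (Pi.single a 1)) x₀ (Pi.single b 1)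
        = if a = b then A a else 0 := by
    intro a b
    by_cases h : a = b
    · subst h; simp [hA]
    · simp [h, hdiag a b h]
  simp only [hgrad, hW, hT] at hE1 hE2
  simp only [ite_mul, mul_ite, zero_mul, mul_zero, Finset.sum_add_distrib,
    Finset.sum_ite_eq, Finset.sum_ite_eq', Finset.mem_univ, if_true, add_zero, zero_add,
    Finset.sum_sub_distrib] at hE1 hE2
  simp only [ContinuousLinearMap.zero_apply] at hE2
  ring_nf at hE1 hE2
  -- third order symmetry + free boundary relation
  have h3 : ∀ j : Fin n, j ≠ N → c * T j j = A N * A j - A j ^ 2 := by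
    intro j hj
    have e3 := aux3 hu (Pi.single j 1) (Pi.single N 1)
    rw [hT j j] at e3
    have h' := hthird j hj
    simp only [hW] at h'
    rw [← e3] at h'
    simpa using h'
  rw [← Finset.add_sum_erase _ A (Finset.mem_univ N)] at hE1 hE2
  rw [← Finset.add_sum_erase _ (fun i => T i i) (Finset.mem_univ N)] at hE2
  have hTsum : c * (∑ i ∈ Finset.univ.erase N, T i i)
      = A N * (∑ i ∈ Finset.univ.erase N, A i) - ∑ i ∈ Finset.univ.erase N, A i ^ 2 := by
    rw [Finset.mul_sum, Finset.mul_sum, ← Finset.sum_sub_distrib]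
    exact Finset.sum_congr rfl fun i hi => h3 i (Finset.ne_of_mem_erase hi)
  -- rewrite the goal
  rw [Finset.filter_ne' Finset.univ N]
  simp only [hW, hT, if_true]
  have h1c : (1:ℝ) + c ^ 2 ≠ 0 := by positivity
  set b := A N with hb
  set S1 := ∑ x ∈ Finset.univ.erase N, A x with hS1def
  set S2 := ∑ x ∈ Finset.univ.erase N, A x ^ 2 with hS2def
  set TS := ∑ x ∈ Finset.univ.erase N, T x x with hTSdef
  set TN := T N N with hTNdef
  have hS1 : S1 = -b / (1 + c ^ 2) := by
    field_simp
    linarith [hE1]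
  have hTS : TS = (b * S1 - S2) / c := by
    field_simp
    linarith [hTsum]
  have hTN : TN = -2*c*b*S1 - (1+c^2)*TS := by linarith [hE2]
  rw [hTN, hTS, hS1]
  field_simp
  ring
end

section
/- For every real t ≥ 1, 1 + (4(t² + (1−t)²) + t³ + 4(1−t)³)/(t² + 4(1−t)² + 4) ≤ 3, and equality holds if and only if t = 2. In particular the maximum of this expression over [1, ∞) equals 3. -/
/-- For every real `t ≥ 1`,
`1 + (4(t² + (1-t)²) + t³ + 4(1-t)³)/(t² + 4(1-t)² + 4) ≤ 3`, with equality iff `t = 2`;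
in particular the maximum of this expression over `[1, ∞)` equals `3`. -/
theorem stmt_17 :
    (∀ t ∈ Set.Ici (1 : ℝ),
      1 + (4 * (t ^ 2 + (1 - t) ^ 2) + t ^ 3 + 4 * (1 - t) ^ 3) /
        (t ^ 2 + 4 * (1 - t) ^ 2 + 4) ≤ 3) ∧
    (∀ t ∈ Set.Ici (1 : ℝ),
      (1 + (4 * (t ^ 2 + (1 - t) ^ 2) + t ^ 3 + 4 * (1 - t) ^ 3) /
        (t ^ 2 + 4 * (1 - t) ^ 2 + 4) = 3 ↔ t = 2)) ∧
    IsGreatest ((fun t : ℝ =>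
        1 + (4 * (t ^ 2 + (1 - t) ^ 2) + t ^ 3 + 4 * (1 - t) ^ 3) /
          (t ^ 2 + 4 * (1 - t) ^ 2 + 4)) '' Set.Ici 1) 3 := by
  have hD : ∀ t : ℝ, (0:ℝ) < t ^ 2 + 4 * (1 - t) ^ 2 + 4 := by
    intro t; positivity
  have hle : ∀ t ∈ Set.Ici (1 : ℝ),
      1 + (4 * (t ^ 2 + (1 - t) ^ 2) + t ^ 3 + 4 * (1 - t) ^ 3) /
        (t ^ 2 + 4 * (1 - t) ^ 2 + 4) ≤ 3 := by
    intro t ht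
    simp only [Set.mem_Ici] at ht
    have h := hD t
    rw [← sub_nonneg]
    have : 3 - (1 + (4 * (t ^ 2 + (1 - t) ^ 2) + t ^ 3 + 4 * (1 - t) ^ 3) /
        (t ^ 2 + 4 * (1 - t) ^ 2 + 4)) =
        ((t - 2) ^ 2 * (3 * t + 2)) / (t ^ 2 + 4 * (1 - t) ^ 2 + 4) := by
      field_simp
      ring
    rw [this]
    apply div_nonneg _ h.le
    nlinarith [sq_nonneg (t - 2)]
  have hiff : ∀ t ∈ Set.Ici (1 : ℝ),
      (1 + (4 * (t ^ 2 + (1 - t) ^ 2) + t ^ 3 + 4 * (1 - t) ^ 3) /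
        (t ^ 2 + 4 * (1 - t) ^ 2 + 4) = 3 ↔ t = 2) := by
    intro t ht
    simp only [Set.mem_Ici] at ht
    have h := hD t
    constructor
    · intro heq
      have h2 : (4 * (t ^ 2 + (1 - t) ^ 2) + t ^ 3 + 4 * (1 - t) ^ 3) =
          2 * (t ^ 2 + 4 * (1 - t) ^ 2 + 4) := by
        field_simp at heq
        linarith
      have h3 : (t - 2) ^ 2 * (3 * t + 2) = 0 := by nlinarith
      have h4 : (3 * t + 2) > 0 := by linarith
      have h5 : (t - 2) ^ 2 = 0 := by
        rcases mul_eq_zero.mp h3 with h | h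
        · exact h
        · linarith
      have := pow_eq_zero_iff (n := 2) (by norm_num) |>.mp h5
      linarith
    · rintro rfl; norm_num
  refine ⟨hle, hiff, ?_, ?_⟩
  · exact ⟨2, by simp, by norm_num⟩
  · rintro x ⟨t, ht, rfl⟩
    exact hle t ht
end
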